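/- arXiv:1806.04648 — 8 statements merged into one kernel-verified Lean document; each statement's English description precedes it below -/
import Mathlib

section
/- For one-dimensional projections e and f on a Hilbert space H, the trace norm of e - f satisfies ‖e - f‖₁ = 2·√(1 - Tr(ef)). -/
open scoped InnerProductSpace

/-! Write `e` and `f` as the rank-one projections onto unit vectors `u` and `v`, and put
`c = ‖⟪u, v⟫‖²`. For idempotents, `(e - f)³ = e - f - efe + fef`, and here `efe = c e`,
`fef = c f`, so `(e - f)³ = s² (e - f)` with `s = √(1 - c)`. Hence the spectrum of the
self-adjoint operator `e - f` lies in `{0, ±s}`, where `|t| = s⁻¹ t²`, so `|e - f| = s⁻¹ (e - f)²`.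
Finally `(e - f)² = (1 - f) e + (1 - e) f` has trace `2 (1 - c) = 2 s²`, while `Tr (e f) = c`. -/

open InnerProductSpace ContinuousLinearMap

section Idempotent

variable {R : Type*} [Ring R] {e f : R}

theorem sub_sq_of_isIdempotentElem (he : IsIdempotentElem e) (hf : IsIdempotentElem f) :
    (e - f) ^ 2 = (1 - f) * e + (1 - e) * f := by
  rw [sq, sub_mul, mul_sub, mul_sub, he.eq, hf.eq]
  noncomm_ring

theorem sub_pow_three_of_isIdempotentElem (he : IsIdempotentElem e) (hf : IsIdempotentElem f) :
    (e - f) ^ 3 = e - f - e * f * e + f * e * f := by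
  rw [pow_succ, sub_sq_of_isIdempotentElem he hf]
  simp only [sub_mul, mul_sub, add_mul, one_mul, mul_assoc, he.eq, hf.eq]
  noncomm_ring

end Idempotent

lemma abs_eq_inv_mul_sq_of_pow_three_eq {x s : ℝ} (hs : 0 ≤ s) (h : x ^ 3 = s ^ 2 * x) :
    |x| = s⁻¹ * x ^ 2 := by
  rcases mul_eq_zero.mp (by linear_combination h : x * (x ^ 2 - s ^ 2) = 0) with rfl | hx
  · simp
  · have hxs : x ^ 2 = s ^ 2 := sub_eq_zero.mp hx
    rw [hxs, (sq_eq_sq_iff_abs_eq_abs x s).mp hxs, abs_of_nonneg hs, sq, ← mul_assoc,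
      inv_mul_mul_self]

/-- For `s = 0` this relies on `0⁻¹ = 0`: the spectrum of `a` is then `{0}` and both sides
vanish. -/
theorem cfc_abs_eq_inv_smul_sq {A : Type*} [Ring A] [StarRing A] [Algebra ℝ A]
    [TopologicalSpace A] [ContinuousFunctionalCalculus ℝ A IsSelfAdjoint] {a : A}
    (ha : IsSelfAdjoint a) {s : ℝ} (hs : 0 ≤ s) (h : a ^ 3 = s ^ 2 • a) :
    cfc (fun t : ℝ => |t|) a = s⁻¹ • a ^ 2 := by
  have hspec : Set.EqOn (fun t : ℝ => t ^ 3) (fun t => s ^ 2 * t) (spectrum ℝ a) :=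
    eqOn_of_cfc_eq_cfc (by rw [cfc_pow_id a 3, cfc_const_mul_id (s ^ 2) a, h])
  rw [cfc_congr fun x hx => abs_eq_inv_mul_sq_of_pow_three_eq hs (hspec hx),
    cfc_const_mul s⁻¹ (fun t : ℝ => t ^ 2) a, cfc_pow_id a 2]

section RankOne

variable {𝕜 E : Type*} [RCLike 𝕜] [NormedAddCommGroup E] [InnerProductSpace 𝕜 E]

theorem IsStarProjection.exists_eq_rankOne_self [CompleteSpace E] {p : E →L[𝕜] E}
    (hp : IsStarProjection p) (h : Module.finrank 𝕜 (LinearMap.range (p : E →ₗ[𝕜] E)) = 1) :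
    ∃ x : E, ‖x‖ = 1 ∧ p = rankOne 𝕜 x x := by
  obtain ⟨_, hp⟩ := isStarProjection_iff_eq_starProjection_range.mp hp
  have : FiniteDimensional 𝕜 p.range := Module.finite_of_finrank_eq_succ h
  let b := (stdOrthonormalBasis 𝕜 p.range).reindex (finCongr h)
  refine ⟨b 0, b.norm_eq_one 0, hp.trans ?_⟩
  rw [b.starProjection_eq_sum_rankOne, Fin.sum_univ_one]

lemma inner_mul_inner_swap (x y : E) : ⟪x, y⟫_𝕜 * ⟪y, x⟫_𝕜 = (‖⟪x, y⟫_𝕜‖ ^ 2 : ℝ) := by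
  rw [← inner_conj_symm y x, RCLike.mul_conj, RCLike.ofReal_pow]

lemma rankOne_self_mul_rankOne_self_mul_rankOne_self (x y : E) :
    rankOne 𝕜 x x * rankOne 𝕜 y y * rankOne 𝕜 x x =
      ((‖⟪x, y⟫_𝕜‖ ^ 2 : ℝ) : 𝕜) • rankOne 𝕜 x x := by
  rw [mul_def, mul_def, rankOne_comp_rankOne, smul_comp, rankOne_comp_rankOne, smul_smul,
    inner_mul_inner_swap]

theorem rankOne_self_sub_rankOne_self_pow_three {x y : E} (hx : ‖x‖ = 1) (hy : ‖y‖ = 1) :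
    (rankOne 𝕜 x x - rankOne 𝕜 y y) ^ 3 =
      ((1 - ‖⟪x, y⟫_𝕜‖ ^ 2 : ℝ) : 𝕜) • (rankOne 𝕜 x x - rankOne 𝕜 y y) := by
  rw [sub_pow_three_of_isIdempotentElem (isIdempotentElem_rankOne_self hx)
    (isIdempotentElem_rankOne_self hy), rankOne_self_mul_rankOne_self_mul_rankOne_self,
    rankOne_self_mul_rankOne_self_mul_rankOne_self, ← norm_inner_symm y x]
  simp only [RCLike.ofReal_sub, RCLike.ofReal_one, sub_smul, one_smul, smul_sub]
  abel

theorem HilbertBasis.hasSum_inner_comp_rankOne_apply {ι : Type*} (b : HilbertBasis ι 𝕜 E)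
    (T : E →L[𝕜] E) (x y : E) :
    HasSum (fun i => ⟪b i, (T ∘L rankOne 𝕜 x y) (b i)⟫_𝕜) ⟪y, T x⟫_𝕜 := by
  simpa [comp_rankOne, inner_smul_right, mul_comm] using b.hasSum_inner_mul_inner y (T x)

theorem HilbertBasis.hasSum_inner_rankOne_self_sub_rankOne_self_sq_apply {ι : Type*}
    (b : HilbertBasis ι 𝕜 E) {x y : E} (hx : ‖x‖ = 1) (hy : ‖y‖ = 1) :
    HasSum (fun i => ⟪b i, ((rankOne 𝕜 x x - rankOne 𝕜 y y) ^ 2) (b i)⟫_𝕜)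
      ((2 * (1 - ‖⟪x, y⟫_𝕜‖ ^ 2) : ℝ) : 𝕜) := by
  rw [sub_sq_of_isIdempotentElem (isIdempotentElem_rankOne_self hx)
    (isIdempotentElem_rankOne_self hy)]
  convert (b.hasSum_inner_comp_rankOne_apply (1 - rankOne 𝕜 y y) x x).add
    (b.hasSum_inner_comp_rankOne_apply (1 - rankOne 𝕜 x x) y y) using 1
  · ext i
    simp only [add_apply, inner_add_right]
    rfl
  · simp only [sub_apply, one_apply_eq_self, inner_sub_right, inner_right_rankOne_apply,
      inner_mul_inner_swap, inner_self_eq_norm_sq_to_K, hx, hy, norm_inner_symm y x]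
    push_cast
    ring

end RankOne

/-- For one-dimensional (orthogonal) projections `e` and `f` on a complex
Hilbert space `H`, the trace norm of `e - f` satisfies `‖e - f‖₁ = 2 √(1 - Tr(e f))`.
Here the trace of a (finite-rank) operator is computed as the sum `∑ᵢ ⟪bᵢ, T bᵢ⟫` over a
Hilbert basis `b` of `H`, and `‖a‖₁ = Tr |a|`, where `|a| = cfc |·| a` is the absolute
value of `a` given by the continuous functional calculus. -/
theorem traceNorm_sub_of_rank_one_projections
    {H : Type*} [NormedAddCommGroup H] [InnerProductSpace ℂ H] [CompleteSpace H]
    {ι : Type*} (b : HilbertBasis ι ℂ H)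
    (e f : H →L[ℂ] H)
    (he : IsSelfAdjoint e) (he' : IsIdempotentElem e)
    (hf : IsSelfAdjoint f) (hf' : IsIdempotentElem f)
    (hre : Module.finrank ℂ (LinearMap.range (e : H →ₗ[ℂ] H)) = 1)
    (hrf : Module.finrank ℂ (LinearMap.range (f : H →ₗ[ℂ] H)) = 1) :
    ∑' i, ⟪b i, (cfc (fun t : ℝ => |t|) (e - f)) (b i)⟫_ℂ =
      ((2 * Real.sqrt (1 - (∑' i, ⟪b i, (e ∘L f) (b i)⟫_ℂ).re) : ℝ) : ℂ) := by
  obtain ⟨u, hu, rfl⟩ := IsStarProjection.exists_eq_rankOne_self ⟨he', he⟩ hre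
  obtain ⟨v, hv, rfl⟩ := IsStarProjection.exists_eq_rankOne_self ⟨hf', hf⟩ hrf
  have htrace_mul : ∑' i, ⟪b i, (rankOne ℂ u u ∘L rankOne ℂ v v) (b i)⟫_ℂ =
      (‖⟪u, v⟫_ℂ‖ ^ 2 : ℝ) := by
    rw [(b.hasSum_inner_comp_rankOne_apply _ v v).tsum_eq, inner_right_rankOne_apply,
      inner_mul_inner_swap, norm_inner_symm, RCLike.ofReal_eq_complex_ofReal]
  have hs : √(1 - ‖⟪u, v⟫_ℂ‖ ^ 2) ^ 2 = 1 - ‖⟪u, v⟫_ℂ‖ ^ 2 := Real.sq_sqrt <| sub_nonneg.mpr <| by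
    simpa [hu, hv] using pow_le_pow_left₀ (norm_nonneg _) (norm_inner_le_norm (𝕜 := ℂ) u v) 2
  have hs0 := Real.sqrt_nonneg (1 - ‖⟪u, v⟫_ℂ‖ ^ 2)
  rw [htrace_mul, Complex.ofReal_re]
  generalize √(1 - ‖⟪u, v⟫_ℂ‖ ^ 2) = s at hs hs0 ⊢
  have hcube : (rankOne ℂ u u - rankOne ℂ v v) ^ 3 = s ^ 2 • (rankOne ℂ u u - rankOne ℂ v v) := by
    rw [hs, rankOne_self_sub_rankOne_self_pow_three hu hv, RCLike.real_smul_eq_coe_smul (K := ℂ)]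
  have htrace_sq := b.hasSum_inner_rankOne_self_sub_rankOne_self_sq_apply hu hv
  rw [← hs] at htrace_sq
  rw [cfc_abs_eq_inv_smul_sq (he.sub hf) hs0 hcube]
  simp only [RCLike.real_smul_eq_coe_smul (K := ℂ) s⁻¹, smul_apply, inner_smul_right]
  rw [(htrace_sq.mul_left _).tsum_eq]
  push_cast
  linear_combination 2 * inv_mul_mul_self (s : ℂ)
end

section
/- Let X be a set and let π be a partition of X. Then π covers exactly three atoms in the partition lattice (ordered by refinement) if and only if π = π_K for a three-element subset K ⊆ X, i.e., π has exactly one non-singleton block and that block has exactly three elements. -/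
/-! Write `π_K` for `Setoid.ofBlock K`. The atoms of the partition lattice are the `π_{x,y}`.
If `π` covers `π_{x,y}`, pick `u, v` related by `π` but not by `π_{x,y}`. If `{u, v}` meets
`{x, y}`, then `π_{x,y,z}` lies between `π_{x,y}` and `π` for the point `z` of `{u, v}` outside
`{x, y}`, so `π = π_{x,y,z}`. Otherwise `π` is the partition with the two blocks `{x, y}` and
`{u, v}`, whose only atoms are `π_{x,y}` and `π_{u,v}`. Conversely, `π_{x,y,z}` covers exactly
`π_{x,y}`, `π_{x,z}` and `π_{y,z}`. -/

namespace Set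

variable {X : Type*}

theorem pair_eq_pair_of_ne_of_mem {x y p q : X} (hpq : p ≠ q)
    (hp : p ∈ ({x, y} : Set X)) (hq : q ∈ ({x, y} : Set X)) : ({p, q} : Set X) = {x, y} := by
  simp only [mem_insert_iff, mem_singleton_iff] at hp hq
  rcases hp with rfl | rfl <;> rcases hq with rfl | rfl
  exacts [absurd rfl hpq, rfl, pair_comm _ _, absurd rfl hpq]

theorem encard_pair_le (a b : X) : ({a, b} : Set X).encard ≤ 2 :=
  (encard_insert_le _ _).trans (by rw [encard_singleton]; rfl)

end Set

namespace Setoid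

variable {X : Type*}

def ofBlock (K : Set X) : Setoid X where
  r a b := a = b ∨ (a ∈ K ∧ b ∈ K)
  iseqv :=
    { refl _ := .inl rfl
      symm := by rintro a b (rfl | ⟨ha, hb⟩) <;> tauto
      trans := by rintro a b c (rfl | ⟨ha, hb⟩) (rfl | ⟨hb', hc⟩) <;> tauto }

theorem ofBlock_le_iff {K : Set X} {r : Setoid X} :
    ofBlock K ≤ r ↔ ∀ a ∈ K, ∀ b ∈ K, r a b := by
  refine ⟨fun h a ha b hb => h (.inr ⟨ha, hb⟩), fun h => le_def.2 ?_⟩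
  rintro a b (rfl | ⟨ha, hb⟩)
  exacts [r.refl a, h a ha b hb]

theorem ofBlock_pair_le_iff {x y : X} {r : Setoid X} : ofBlock {x, y} ≤ r ↔ r x y := by
  simp only [ofBlock_le_iff, Set.forall_mem_insert, Set.mem_singleton_iff, forall_eq]
  exact ⟨fun h => h.1.2, fun h => ⟨⟨r.refl x, h⟩, r.symm h, r.refl y⟩⟩

theorem exists_rel_of_ne_bot {r : Setoid X} (hr : r ≠ ⊥) : ∃ x y, x ≠ y ∧ r x y := by
  contrapose! hr
  ext x y
  exact ⟨fun h => by_contra fun hxy => hr x y hxy h, fun h => h ▸ r.refl x⟩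

theorem isAtom_ofBlock_pair {x y : X} (hxy : x ≠ y) : IsAtom (ofBlock {x, y}) := by
  refine ⟨fun h => hxy (ofBlock_pair_le_iff.1 h.le), fun r hr => ?_⟩
  by_contra hne
  obtain ⟨p, q, hpq, hrpq⟩ := exists_rel_of_ne_bot hne
  obtain ⟨hp, hq⟩ := (le_def.1 hr.le hrpq).resolve_left hpq
  rw [← Set.pair_eq_pair_of_ne_of_mem hpq hp hq] at hr
  exact hr.not_ge (ofBlock_pair_le_iff.2 hrpq)

theorem isAtom_iff {r : Setoid X} : IsAtom r ↔ ∃ x y, x ≠ y ∧ r = ofBlock {x, y} := by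
  refine ⟨fun hr => ?_, fun ⟨x, y, hxy, hr⟩ => hr ▸ isAtom_ofBlock_pair hxy⟩
  obtain ⟨x, y, hxy, hrxy⟩ := exists_rel_of_ne_bot hr.1
  exact ⟨x, y, hxy, ((hr.le_iff_eq (isAtom_ofBlock_pair hxy).1).1
    (ofBlock_pair_le_iff.2 hrxy)).symm⟩

theorem isAtom_and_le_iff {r α : Setoid X} :
    IsAtom α ∧ α ≤ r ↔ ∃ x y, x ≠ y ∧ r x y ∧ α = ofBlock {x, y} := by
  constructor
  · rintro ⟨hα, hαr⟩
    obtain ⟨x, y, hxy, rfl⟩ := isAtom_iff.1 hα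
    exact ⟨x, y, hxy, ofBlock_pair_le_iff.1 hαr, rfl⟩
  · rintro ⟨x, y, hxy, hrxy, rfl⟩
    exact ⟨isAtom_ofBlock_pair hxy, ofBlock_pair_le_iff.2 hrxy⟩

theorem ofBlock_insert_le {K : Set X} {r : Setoid X} {k z : X} (hK : ofBlock K ≤ r) (hk : k ∈ K)
    (hkz : r k z) : ofBlock (insert z K) ≤ r := by
  have hKr := ofBlock_le_iff.1 hK
  have hzK : ∀ b ∈ K, r z b := fun b hb => r.trans (r.symm hkz) (hKr k hk b hb)
  rw [ofBlock_le_iff]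
  simp only [Set.forall_mem_insert]
  exact ⟨⟨r.refl z, hzK⟩, fun a ha => ⟨r.symm (hzK a ha), hKr a ha⟩⟩

theorem ofBlock_lt_ofBlock_insert {K : Set X} {k z : X} (hk : k ∈ K) (hz : z ∉ K) :
    ofBlock K < ofBlock (insert z K) := by
  refine lt_of_le_not_ge (ofBlock_le_iff.2 fun a ha b hb => .inr ⟨.inr ha, .inr hb⟩) fun h => ?_
  rcases le_def.1 h (show ofBlock (insert z K) k z from .inr ⟨.inr hk, .inl rfl⟩) with
    rfl | ⟨-, hz'⟩
  exacts [hz hk, hz hz']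

theorem ofBlock_covBy_ofBlock_insert {K : Set X} {z : X} (hK : K.Nonempty) (hz : z ∉ K) :
    ofBlock K ⋖ ofBlock (insert z K) := by
  obtain ⟨k, hk⟩ := hK
  refine ⟨ofBlock_lt_ofBlock_insert hk hz, fun r hKr hrz => ?_⟩
  obtain ⟨p, q, hrpq, hpq⟩ : ∃ p q, r p q ∧ ¬ ofBlock K p q := by
    simpa [le_def] using hKr.not_ge
  have hne : p ≠ q := fun h => hpq (.inl h)
  obtain ⟨hp, hq⟩ := (le_def.1 hrz.le hrpq).resolve_left hne
  rcases hp with rfl | hp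
  · have hq : q ∈ K := hq.resolve_left (Ne.symm hne)
    exact hrz.not_ge (ofBlock_insert_le hKr.le hq (r.symm hrpq))
  · have hq : q = z := hq.resolve_right fun hq => hpq (.inr ⟨hp, hq⟩)
    exact hrz.not_ge (hq ▸ ofBlock_insert_le hKr.le hp hrpq)

theorem eq_ofBlock_insert_of_covBy {K : Set X} {r : Setoid X} {k z : X} (hcov : ofBlock K ⋖ r)
    (hk : k ∈ K) (hz : z ∉ K) (hkz : r k z) : r = ofBlock (insert z K) :=
  ((hcov.eq_or_eq (ofBlock_lt_ofBlock_insert hk hz).le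
    (ofBlock_insert_le hcov.le hk hkz)).resolve_left (ofBlock_lt_ofBlock_insert hk hz).ne').symm

theorem ofBlock_pair_inj {x y u v : X} (hxy : x ≠ y) :
    ofBlock {x, y} = ofBlock {u, v} ↔ ({x, y} : Set X) = {u, v} := by
  refine ⟨fun h => ?_, fun h => h ▸ rfl⟩
  obtain ⟨hx, hy⟩ := (ofBlock_pair_le_iff.1 h.le).resolve_left hxy
  exact Set.pair_eq_pair_of_ne_of_mem hxy hx hy

def ofDisjointBlocks {K L : Set X} (h : Disjoint K L) : Setoid X where
  r a b := a = b ∨ (a ∈ K ∧ b ∈ K) ∨ (a ∈ L ∧ b ∈ L)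
  iseqv :=
    { refl _ := .inl rfl
      symm := by rintro a b (rfl | ⟨ha, hb⟩ | ⟨ha, hb⟩) <;> tauto
      trans := by
        rintro a b c (rfl | ⟨ha, hb⟩ | ⟨ha, hb⟩) (rfl | ⟨hb', hc⟩ | ⟨hb', hc⟩) <;>
          first
            | tauto
            | exact (Set.disjoint_left.1 h hb hb').elim
            | exact (Set.disjoint_left.1 h hb' hb).elim }

theorem eq_ofDisjointBlocks_of_covBy {K L : Set X} {r : Setoid X} (hcov : ofBlock K ⋖ r)
    (h : Disjoint K L) (hL : ∀ a ∈ L, ∀ b ∈ L, r a b) (hL' : L.Nontrivial) :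
    r = ofDisjointBlocks h := by
  have hlt : ofBlock K < ofDisjointBlocks h := by
    obtain ⟨a, ha, b, hb, hab⟩ := hL'
    refine lt_of_le_not_ge (le_def.2 fun hrel => hrel.imp_right .inl) fun hge => ?_
    rcases le_def.1 hge (show ofDisjointBlocks h a b from .inr (.inr ⟨ha, hb⟩)) with
      hab' | ⟨ha', -⟩
    exacts [hab hab', Set.disjoint_left.1 h ha' ha]
  have hle : ofDisjointBlocks h ≤ r := by
    refine le_def.2 ?_
    rintro a b (rfl | ⟨ha, hb⟩ | ⟨ha, hb⟩)
    exacts [r.refl a, ofBlock_le_iff.1 hcov.le a ha b hb, hL a ha b hb]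
  exact ((hcov.eq_or_eq hlt.le hle).resolve_left hlt.ne').symm

theorem eq_ofBlock_insert_or_eq_ofDisjointBlocks_of_covBy {x y : X} {r : Setoid X}
    (hcov : ofBlock {x, y} ⋖ r) :
    (∃ z ∉ ({x, y} : Set X), r = ofBlock (insert z {x, y})) ∨
      ∃ u v, u ≠ v ∧ ∃ h : Disjoint ({x, y} : Set X) {u, v}, r = ofDisjointBlocks h := by
  obtain ⟨u, v, hruv, huv⟩ : ∃ u v, r u v ∧ ¬ ofBlock {x, y} u v := by
    simpa [le_def] using hcov.lt.not_ge
  have hne : u ≠ v := fun h => huv (.inl h)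
  by_cases hu : u ∈ ({x, y} : Set X)
  · have hv : v ∉ ({x, y} : Set X) := fun hv => huv (.inr ⟨hu, hv⟩)
    exact .inl ⟨v, hv, eq_ofBlock_insert_of_covBy hcov hu hv hruv⟩
  by_cases hv : v ∈ ({x, y} : Set X)
  · exact .inl ⟨u, hu, eq_ofBlock_insert_of_covBy hcov hv hu (r.symm hruv)⟩
  have h : Disjoint ({x, y} : Set X) {u, v} := by
    refine Set.disjoint_right.2 fun a ha => ?_
    rcases ha with rfl | rfl
    exacts [hu, hv]
  exact .inr ⟨u, v, hne, h, eq_ofDisjointBlocks_of_covBy hcov h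
    (ofBlock_le_iff.1 (ofBlock_pair_le_iff.2 hruv)) (Set.nontrivial_pair hne)⟩

theorem eq_or_eq_of_isAtom_of_le_ofDisjointBlocks {x y u v : X}
    {h : Disjoint ({x, y} : Set X) {u, v}} {α : Setoid X} (hα : IsAtom α)
    (hle : α ≤ ofDisjointBlocks h) : α = ofBlock {x, y} ∨ α = ofBlock {u, v} := by
  obtain ⟨p, q, hpq, hrel, rfl⟩ := isAtom_and_le_iff.1 ⟨hα, hle⟩
  rcases hrel with hpq' | ⟨hp, hq⟩ | ⟨hp, hq⟩
  · exact absurd hpq' hpq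
  · exact .inl (by rw [Set.pair_eq_pair_of_ne_of_mem hpq hp hq])
  · exact .inr (by rw [Set.pair_eq_pair_of_ne_of_mem hpq hp hq])

theorem setOf_isAtom_covBy_ofBlock_triple {x y z : X} (hxy : x ≠ y) (hxz : x ≠ z)
    (hyz : y ≠ z) :
    {α | IsAtom α ∧ α ⋖ ofBlock {x, y, z}} = {ofBlock {x, y}, ofBlock {x, z}, ofBlock {y, z}} := by
  ext α
  constructor
  · rintro ⟨hα, hcov⟩
    obtain ⟨p, q, hpq, hrel, rfl⟩ := isAtom_and_le_iff.1 ⟨hα, hcov.le⟩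
    obtain ⟨hp, hq⟩ := hrel.resolve_left hpq
    simp only [Set.mem_insert_iff, Set.mem_singleton_iff] at hp hq ⊢
    rcases hp with rfl | rfl | rfl <;> rcases hq with rfl | rfl | rfl <;> simp_all [Set.pair_comm]
  · have hxy_cov : ofBlock {x, y} ⋖ ofBlock {x, y, z} := by
      rw [Set.pair_comm y z, Set.insert_comm]
      exact ofBlock_covBy_ofBlock_insert (Set.insert_nonempty _ _) (by simp [hxz.symm, hyz.symm])
    have hxz_cov : ofBlock {x, z} ⋖ ofBlock {x, y, z} := by
      rw [Set.insert_comm]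
      exact ofBlock_covBy_ofBlock_insert (Set.insert_nonempty _ _) (by simp [hxy.symm, hyz])
    have hyz_cov : ofBlock {y, z} ⋖ ofBlock {x, y, z} :=
      ofBlock_covBy_ofBlock_insert (Set.insert_nonempty _ _) (by simp [hxy, hxz])
    rintro (rfl | rfl | rfl)
    exacts [⟨isAtom_ofBlock_pair hxy, hxy_cov⟩, ⟨isAtom_ofBlock_pair hxz, hxz_cov⟩,
      ⟨isAtom_ofBlock_pair hyz, hyz_cov⟩]

end Setoid

open Setoid

/-- A partition `π` of a set `X` covers exactly three atoms in the partition
lattice (ordered by refinement) if and only if `π = π_K` for a three-element subset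
`K ⊆ X`, i.e. `π` has exactly one non-singleton block and that block has exactly three
elements. -/
theorem covers_three_atoms_iff {X : Type*} (π : Setoid X) :
    {α : Setoid X | IsAtom α ∧ α ⋖ π}.encard = 3 ↔
      ∃ x y z : X, x ≠ y ∧ x ≠ z ∧ y ≠ z ∧
        ∀ a b : X, π a b ↔
          (a = b ∨ (a ∈ ({x, y, z} : Set X) ∧ b ∈ ({x, y, z} : Set X))) := by
  constructor
  · intro h3
    obtain ⟨α, hα, hcov⟩ : {α | IsAtom α ∧ α ⋖ π}.Nonempty :=
      Set.nonempty_of_encard_ne_zero (by simp [h3])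
    obtain ⟨x, y, hxy, rfl⟩ := isAtom_iff.1 hα
    rcases eq_ofBlock_insert_or_eq_ofDisjointBlocks_of_covBy hcov with
      ⟨z, hz, rfl⟩ | ⟨u, v, -, h, rfl⟩
    · simp only [Set.mem_insert_iff, Set.mem_singleton_iff, not_or] at hz
      exact ⟨z, x, y, hz.1, hz.2, hxy, fun a b => Iff.rfl⟩
    · have h2 : {α | IsAtom α ∧ α ⋖ ofDisjointBlocks h}.encard ≤ 2 :=
        (Set.encard_le_encard fun β hβ => eq_or_eq_of_isAtom_of_le_ofDisjointBlocks hβ.1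
          hβ.2.le).trans (Set.encard_pair_le _ _)
      exact absurd (h3 ▸ h2) (by norm_num)
  · rintro ⟨x, y, z, hxy, hxz, hyz, hπ⟩
    obtain rfl : π = ofBlock {x, y, z} := Setoid.ext hπ
    rw [setOf_isAtom_covBy_ofBlock_triple hxy hxz hyz, Set.encard_eq_three]
    refine ⟨_, _, _, (ofBlock_pair_inj hxy).not.2 ?_, (ofBlock_pair_inj hxy).not.2 ?_,
      (ofBlock_pair_inj hxz).not.2 ?_, rfl⟩ <;> simp [Set.pair_eq_pair_iff, hxy, hxz, hyz]
end

section
/- Let X be a set with at least two elements. A partition π of X has at most one non-singleton block if and only if: π is an atom, or π covers exactly three atoms, or whenever α ≠ β are atoms below π, there exists an atom γ ≤ π such that α ∨ γ covers three distinct atoms and β ∨ γ covers three distinct atoms. -/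
/-!
The atoms of the partition lattice are the partitions `block {a, b}` whose only non-singleton
block is a pair. If two distinct pairs meet, their join is `block {x, y, z}`, which covers exactly
the three atoms inside `{x, y, z}`. If instead `π` has two non-singleton blocks containing
`a ≠ b` and `c ≠ d`, then an atom `δ ⋖ π` other than `block {a, b}` satisfies
`π = δ ⊔ block {a, b}`, which forces `δ = block {c, d}`; so `π` covers at most two atoms, and
in particular a join of two disjoint pairs never covers three. For the forward direction, `γ`
joins a point of `α` outside `β` to a point of `β` outside `α`.
-/

namespace Setoid

variable {X : Type*} {S T : Set X} {σ δ : Setoid X} {a b c d u v z : X}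

def block (S : Set X) : Setoid X where
  r a b := a = b ∨ a ∈ S ∧ b ∈ S
  iseqv :=
    { refl := fun _ => Or.inl rfl
      symm := by rintro a b (rfl | ⟨ha, hb⟩) <;> tauto
      trans := by rintro a b c (rfl | ⟨ha, hb⟩) (rfl | ⟨hb', hc⟩) <;> tauto }

theorem block_rel_iff : block S a b ↔ a = b ∨ a ∈ S ∧ b ∈ S := Iff.rfl

theorem block_rel_iff_of_ne (hab : a ≠ b) : block S a b ↔ a ∈ S ∧ b ∈ S := by
  simp [block_rel_iff, hab]

theorem block_le_iff : block S ≤ σ ↔ ∀ a ∈ S, ∀ b ∈ S, σ a b :=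
  ⟨fun h a ha b hb => h (Or.inr ⟨ha, hb⟩), fun h a b => by
    rintro (rfl | ⟨ha, hb⟩)
    exacts [σ.refl' a, h a ha b hb]⟩

theorem block_mono (h : S ⊆ T) : block S ≤ block T := by
  rintro a b (rfl | ⟨ha, hb⟩)
  exacts [Or.inl rfl, Or.inr ⟨h ha, h hb⟩]

theorem block_pair_le_iff : block {a, b} ≤ σ ↔ σ a b := by
  simp [block_le_iff, σ.comm' (x := b)]

theorem block_singleton (a : X) : block {a} = ⊥ := by
  ext x y
  simp only [block_rel_iff, Set.mem_singleton_iff, bot_def]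
  constructor
  · rintro (h | ⟨rfl, rfl⟩)
    exacts [h, rfl]
  · exact Or.inl

theorem block_sup_block (h : (S ∩ T).Nonempty) : block S ⊔ block T = block (S ∪ T) := by
  obtain ⟨w, hwS, hwT⟩ := h
  refine le_antisymm (sup_le (block_mono Set.subset_union_left)
    (block_mono Set.subset_union_right)) (block_le_iff.2 ?_)
  have hw : ∀ a ∈ S ∪ T, (block S ⊔ block T) a w := by
    rintro a (ha | ha)
    exacts [(le_sup_left : block S ≤ _) (Or.inr ⟨ha, hwS⟩),
      (le_sup_right : block T ≤ _) (Or.inr ⟨ha, hwT⟩)]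
  exact fun a ha b hb => Setoid.trans' _ (hw a ha) (Setoid.symm' _ (hw b hb))

theorem block_covBy_block_insert (hS : S.Nonempty) (hz : z ∉ S) :
    block S ⋖ block (insert z S) := by
  obtain ⟨s, hs⟩ := hS
  refine ⟨(block_mono (Set.subset_insert z S)).lt_of_not_ge fun h => ?_, fun σ hSσ hσ => ?_⟩
  · have hzs := h (Or.inr ⟨Set.mem_insert z S, Set.mem_insert_of_mem z hs⟩)
    exact hz ((block_rel_iff_of_ne (ne_of_mem_of_not_mem hs hz).symm).1 hzs).1
  obtain ⟨p, q, hpq, hnpq⟩ : ∃ p q, σ p q ∧ ¬ block S p q := by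
    by_contra! h
    exact hSσ.not_ge fun p q => h p q
  have hne : p ≠ q := fun h => hnpq (Or.inl h)
  obtain ⟨hp, hq⟩ := (block_rel_iff_of_ne hne).1 (hσ.le hpq)
  obtain ⟨t, ht, hzt⟩ : ∃ t ∈ S, σ z t := by
    rcases hp with rfl | hp
    · exact ⟨q, hq.resolve_left hne.symm, hpq⟩
    · rcases hq with rfl | hq
      exacts [⟨p, hp, σ.symm' hpq⟩, (hnpq (Or.inr ⟨hp, hq⟩)).elim]
  refine hσ.not_ge ?_
  have hinsert : block (insert z S) = block S ⊔ block {z, t} := by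
    rw [block_sup_block ⟨t, ht, by simp⟩, Set.union_insert, Set.union_singleton,
      Set.insert_eq_of_mem ht]
  exact hinsert ▸ sup_le hSσ.le (block_pair_le_iff.2 hzt)

theorem isAtom_block_pair (hab : a ≠ b) : IsAtom (block {a, b}) :=
  bot_covBy_iff.1 (block_singleton b ▸ block_covBy_block_insert (Set.singleton_nonempty b) hab)

theorem eq_block_pair_of_isAtom (hδ : IsAtom δ) (h : δ a b) (hab : a ≠ b) :
    δ = block {a, b} :=
  ((hδ.le_iff_eq (isAtom_block_pair hab).1).1 (block_pair_le_iff.2 h)).symm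

theorem exists_eq_block_pair_of_isAtom (hδ : IsAtom δ) : ∃ a b, a ≠ b ∧ δ = block {a, b} := by
  obtain ⟨a, b, h, hab⟩ : ∃ a b, δ a b ∧ a ≠ b := by
    by_contra! h
    exact hδ.1 (le_bot_iff.1 fun a b hab => h a b hab)
  exact ⟨a, b, hab, eq_block_pair_of_isAtom hδ h hab⟩

theorem exists_mem_not_mem_of_block_ne (hS : IsAtom (block S)) (hT : block T ≠ ⊥)
    (h : block T ≠ block S) : ∃ v ∈ T, v ∉ S :=
  Set.not_subset.1 fun hTS => h ((hS.le_iff_eq hT).1 (block_mono hTS))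

theorem block_pair_ne_block (hab : a ≠ b) (h : ¬ (a ∈ T ∧ b ∈ T)) : block {a, b} ≠ block T :=
  fun e => h ((block_rel_iff_of_ne hab).1 (e ▸ block_pair_le_iff.1 le_rfl))

theorem encard_atoms_covBy_block_triple {x y z : X} (hxy : x ≠ y) (hyz : y ≠ z) (hxz : x ≠ z) :
    {δ : Setoid X | IsAtom δ ∧ δ ⋖ block {x, y, z}}.encard = 3 := by
  refine Set.encard_eq_three.2 ⟨block {y, z}, block {x, z}, block {x, y},
    block_pair_ne_block hyz (by simp [hxy.symm, hyz]),
    block_pair_ne_block hyz (by simp [hxz.symm, hyz.symm]),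
    block_pair_ne_block hxz (by simp [hxz.symm, hyz.symm]), ?_⟩
  ext δ
  simp only [Set.mem_ofPred_eq, Set.mem_insert_iff, Set.mem_singleton_iff]
  constructor
  · rintro ⟨hδ, hδc⟩
    obtain ⟨s, t, hst, rfl⟩ := exists_eq_block_pair_of_isAtom hδ
    obtain ⟨hs, ht⟩ := (block_rel_iff_of_ne hst).1 (hδc.le (block_pair_le_iff.1 le_rfl))
    simp only [Set.mem_insert_iff, Set.mem_singleton_iff] at hs ht
    rcases hs with rfl | rfl | rfl <;> rcases ht with rfl | rfl | rfl <;>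
      simp_all [Set.pair_comm]
  · rintro (rfl | rfl | rfl)
    · exact ⟨isAtom_block_pair hyz, block_covBy_block_insert (by simp) (by simp [hxy, hxz])⟩
    · refine ⟨isAtom_block_pair hxz, ?_⟩
      rw [Set.insert_comm]
      exact block_covBy_block_insert (by simp) (by simp [hxy.symm, hyz])
    · refine ⟨isAtom_block_pair hxy, ?_⟩
      rw [Set.pair_comm y z, Set.insert_comm x z]
      exact block_covBy_block_insert (by simp) (by simp [hxz.symm, hyz.symm])

theorem encard_atoms_covBy_block_pair_sup_eq_three (hab : a ≠ b) (hu : u ∈ ({a, b} : Set X))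
    (hv : v ∉ ({a, b} : Set X)) :
    {δ : Setoid X | IsAtom δ ∧ δ ⋖ block {a, b} ⊔ block {u, v}}.encard = 3 := by
  rw [block_sup_block ⟨u, hu, by simp⟩, Set.union_insert, Set.union_singleton, Set.insert_comm,
    Set.insert_eq_of_mem hu]
  simp only [Set.mem_insert_iff, Set.mem_singleton_iff, not_or] at hv
  exact encard_atoms_covBy_block_triple hv.1 hab hv.2

theorem encard_atoms_covBy_le_two (hab : σ a b) (hcd : σ c d) (ha : a ≠ b) (hc : c ≠ d)
    (hac : ¬ σ a c) : {δ : Setoid X | IsAtom δ ∧ δ ⋖ σ}.encard ≤ 2 := by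
  have hsub : {δ : Setoid X | IsAtom δ ∧ δ ⋖ σ} ⊆ {block {a, b}, block {c, d}} := by
    rintro δ ⟨hδ, hδσ⟩
    refine or_iff_not_imp_left.2 fun hne => ?_
    obtain ⟨x, y, hxy, rfl⟩ := exists_eq_block_pair_of_isAtom hδ
    -- a cover of `σ` not containing `a ~ b` is completed to `σ` by adding `a ~ b`
    have hσ : σ = block {x, y} ⊔ block {a, b} := by
      refine ((hδσ.eq_or_eq le_sup_left (sup_le hδσ.le (block_pair_le_iff.2 hab))).resolve_left
        fun h => hne ?_).symm
      exact ((hδ.le_iff_eq (isAtom_block_pair ha).1).1 (h ▸ le_sup_right)).symm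
    have hout : ∀ e, σ e c → e ∉ ({a, b} : Set X) := by
      rintro e he (rfl | rfl)
      exacts [hac he, hac (σ.trans' hab he)]
    have hσle : σ ≤ block ({x, y} ∪ {a, b}) :=
      hσ ▸ sup_le (block_mono Set.subset_union_left) (block_mono Set.subset_union_right)
    obtain ⟨hcS, hdS⟩ := (block_rel_iff_of_ne hc).1 (hσle hcd)
    have hcd' : block {x, y} c d := (block_rel_iff_of_ne hc).2
      ⟨hcS.resolve_right (hout c (σ.refl' c)), hdS.resolve_right (hout d (σ.symm' hcd))⟩
    exact eq_block_pair_of_isAtom hδ hcd' hc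
  exact (Set.encard_mono hsub).trans
    ((Set.encard_insert_le _ _).trans_eq (by rw [Set.encard_singleton, one_add_one_eq_two]))

theorem rel_of_encard_atoms_covBy_block_pair_sup_eq_three {p q : X} (hab : a ≠ b) (hpq : p ≠ q)
    (h : {δ : Setoid X | IsAtom δ ∧ δ ⋖ block {a, b} ⊔ block {p, q}}.encard = 3) :
    (block {a, b} ⊔ block {p, q}) a p := by
  by_contra hap
  have := encard_atoms_covBy_le_two
    ((le_sup_left : block {a, b} ≤ _) (block_pair_le_iff.1 le_rfl))
    ((le_sup_right : block {p, q} ≤ _) (block_pair_le_iff.1 le_rfl)) hab hpq hap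
  rw [h] at this
  exact absurd this (by decide)

end Setoid

open Setoid

theorem at_most_one_nonsingleton_block_iff_general {X : Type*}
    (π : Setoid X) :
    (∀ a b c d : X, π a b → π c d → a ≠ b → c ≠ d → π a c) ↔
      (IsAtom π ∨
        {δ : Setoid X | IsAtom δ ∧ δ ⋖ π}.encard = 3 ∨
        (∀ α β : Setoid X, IsAtom α → IsAtom β → α ≠ β → α ≤ π → β ≤ π →
          ∃ γ : Setoid X, IsAtom γ ∧ γ ≤ π ∧
            {δ : Setoid X | IsAtom δ ∧ δ ⋖ α ⊔ γ}.encard = 3 ∧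
            {δ : Setoid X | IsAtom δ ∧ δ ⋖ β ⊔ γ}.encard = 3)) := by
  constructor
  · refine fun H => Or.inr (Or.inr fun α β hα hβ hαβ hαπ hβπ => ?_)
    obtain ⟨a, b, hab, rfl⟩ := exists_eq_block_pair_of_isAtom hα
    obtain ⟨c, d, hcd, rfl⟩ := exists_eq_block_pair_of_isAtom hβ
    obtain ⟨u, hu, hu'⟩ := exists_mem_not_mem_of_block_ne hβ hα.1 hαβ
    obtain ⟨v, hv, hv'⟩ := exists_mem_not_mem_of_block_ne hα hβ.1 hαβ.symm
    have huv : π u v := π.trans' (block_le_iff.1 hαπ u hu a (by simp))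
      (π.trans' (H a b c d (block_pair_le_iff.1 hαπ) (block_pair_le_iff.1 hβπ) hab hcd)
        (block_le_iff.1 hβπ c (by simp) v hv))
    refine ⟨block {u, v}, isAtom_block_pair (ne_of_mem_of_not_mem hu hv'),
      block_pair_le_iff.2 huv, encard_atoms_covBy_block_pair_sup_eq_three hab hu hv', ?_⟩
    rw [Set.pair_comm u v]
    exact encard_atoms_covBy_block_pair_sup_eq_three hcd hv hu'
  · refine fun H a b c d hab hcd ha hc => by_contra fun hac => ?_
    have hcd_not_in_ab : ¬ block {a, b} c d := fun h => hac <|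
      block_le_iff.1 (block_pair_le_iff.2 hab) a (by simp) c ((block_rel_iff_of_ne hc).1 h).1
    rcases H with hπ | hπ | hπ
    · exact hcd_not_in_ab (eq_block_pair_of_isAtom hπ hab ha ▸ hcd)
    · exact absurd (encard_atoms_covBy_le_two hab hcd ha hc hac) (by rw [hπ]; decide)
    obtain ⟨γ, hγ, hγπ, hαγ, hβγ⟩ := hπ _ _ (isAtom_block_pair ha) (isAtom_block_pair hc)
      (fun h => hcd_not_in_ab (h ▸ block_pair_le_iff.1 le_rfl))
      (block_pair_le_iff.2 hab) (block_pair_le_iff.2 hcd)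
    obtain ⟨p, q, hpq, rfl⟩ := exists_eq_block_pair_of_isAtom hγ
    have hap : π a p := sup_le (block_pair_le_iff.2 hab) hγπ
      (rel_of_encard_atoms_covBy_block_pair_sup_eq_three ha hpq hαγ)
    have hcp : π c p := sup_le (block_pair_le_iff.2 hcd) hγπ
      (rel_of_encard_atoms_covBy_block_pair_sup_eq_three hc hpq hβγ)
    exact hac (π.trans' hap (π.symm' hcp))

/-- Let `X` be a set with at least two elements. A partition `π` of `X` has at
most one non-singleton block if and only if: `π` is an atom in the partition lattice
(ordered by refinement), or `π` covers exactly three atoms, or whenever `α ≠ β` are atoms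
below `π` there exists an atom `γ ≤ π` such that `α ⊔ γ` covers exactly three distinct
atoms and `β ⊔ γ` covers exactly three distinct atoms. -/
theorem at_most_one_nonsingleton_block_iff {X : Type*} (hX : ∃ x y : X, x ≠ y)
    (π : Setoid X) :
    (∀ a b c d : X, π a b → π c d → a ≠ b → c ≠ d → π a c) ↔
      (IsAtom π ∨
        {δ : Setoid X | IsAtom δ ∧ δ ⋖ π}.encard = 3 ∨
        (∀ α β : Setoid X, IsAtom α → IsAtom β → α ≠ β → α ≤ π → β ≤ π →
          ∃ γ : Setoid X, IsAtom γ ∧ γ ≤ π ∧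
            {δ : Setoid X | IsAtom δ ∧ δ ⋖ α ⊔ γ}.encard = 3 ∧
            {δ : Setoid X | IsAtom δ ∧ δ ⋖ β ⊔ γ}.encard = 3)) :=
  at_most_one_nonsingleton_block_iff_general π
end

section
/- Let X and Y be finite sets with |X| = |Y| = n > 2, and let F be an order isomorphism between the posets of subsets of X (resp. Y) of cardinality at least two, ordered by inclusion. Then there exists a unique bijection φ : X → Y such that F(S) = φ[S] for every subset S of X with at least two elements. -/
/-! The elements of `F₂(X)` covered by its maximum `X` are exactly the complements `X \ {x}` of
points, and an order isomorphism preserves this property, so `F (X \ {x}) = Y \ {φ x}` for some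
`φ x`. Since `S ⊆ X \ {x}` iff `x ∉ S`, this gives `φ x ∈ F S ↔ x ∈ S` for every `S`. When
`|X| > 2` the complements of points lie in `F₂(X)` and separate points, which makes `φ` injective,
hence bijective, and unique. -/

open Finset

local notation "F₂" X:max => {S : Finset X // 2 ≤ Finset.card S}

theorem OrderIso.exists_isMax_covBy_apply_iff {α β : Type*} [Preorder α] [Preorder β]
    (f : α ≃o β) {a : α} : (∃ b, IsMax b ∧ f a ⋖ b) ↔ ∃ b, IsMax b ∧ a ⋖ b := by
  constructor
  · rintro ⟨b, hb, hab⟩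
    refine ⟨f.symm b, f.symm.isMax_apply.2 hb, ?_⟩
    rwa [← apply_covBy_apply_iff f, f.apply_symm_apply]
  · rintro ⟨b, hb, hab⟩
    exact ⟨f b, f.isMax_apply.2 hb, (apply_covBy_apply_iff f).2 hab⟩

namespace Finset

variable {X Y : Type*}

theorem isUpperSet_two_le_card : IsUpperSet {S : Finset X | 2 ≤ #S} :=
  fun _ _ hST hS => hS.trans (card_le_card hST)

theorem coe_covBy_coe_two_le_card {S T : F₂ X} : (S : Finset X) ⋖ T ↔ S ⋖ T :=
  Set.OrdConnected.apply_covBy_apply_iff (OrderEmbedding.subtype fun S : Finset X => 2 ≤ #S) <| by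
    simpa [Subtype.range_coe_subtype] using isUpperSet_two_le_card.ordConnected

variable [Fintype X]

theorem isMax_two_le_card_iff {S : F₂ X} : IsMax S ↔ (S : Finset X) = univ := by
  refine ⟨fun h => ?_, fun h T _ => by rw [Subtype.mk_le_mk, h]; exact subset_univ _⟩
  have hU : 2 ≤ #(univ : Finset X) := S.2.trans (card_le_card (subset_univ _))
  exact eq_univ_of_forall fun x => h (b := ⟨univ, hU⟩) (subset_univ _) (mem_univ x)

theorem exists_isMax_covBy_iff_eq_univ_erase [DecidableEq X] {S : F₂ X} :
    (∃ T, IsMax T ∧ S ⋖ T) ↔ ∃ x, (S : Finset X) = univ.erase x := by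
  simp only [isMax_two_le_card_iff, ← coe_covBy_coe_two_le_card]
  constructor
  · rintro ⟨T, hT, hST⟩
    obtain ⟨x, -, hx⟩ := covBy_iff_exists_erase.1 (hT ▸ hST)
    exact ⟨x, hx.symm⟩
  · rintro ⟨x, hx⟩
    have hU : 2 ≤ #(univ : Finset X) := S.2.trans (card_le_card (subset_univ _))
    exact ⟨⟨univ, hU⟩, rfl, hx ▸ erase_covBy (mem_univ x)⟩

theorem eq_of_forall_two_le_card_mem_iff (hX : 3 ≤ Fintype.card X) {a b : X}
    (h : ∀ S : F₂ X, a ∈ (S : Finset X) ↔ b ∈ (S : Finset X)) : a = b := by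
  classical
  by_contra hab
  have hS : 2 ≤ #(univ.erase a) := by rw [card_erase_of_mem (mem_univ a), card_univ]; omega
  exact notMem_erase a univ ((h ⟨_, hS⟩).2 (mem_erase.2 ⟨Ne.symm hab, mem_univ b⟩))

theorem _root_.Equiv.eq_of_forall_image_two_le_card_eq [DecidableEq Y]
    (hX : 3 ≤ Fintype.card X) {φ ψ : X ≃ Y}
    (h : ∀ S : F₂ X, (S : Finset X).image φ = (S : Finset X).image ψ) : φ = ψ := by
  ext x
  have hx : ψ.symm (φ x) = x := Eq.symm <| eq_of_forall_two_le_card_mem_iff hX fun S => by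
    rw [← φ.injective.mem_finset_image, h S, ← ψ.apply_symm_apply (φ x),
      ψ.injective.mem_finset_image, ψ.apply_symm_apply]
  exact ψ.symm_apply_eq.1 hx

variable [Fintype Y] (F : F₂ X ≃o F₂ Y)

theorem exists_apply_eq_univ_erase [DecidableEq X] [DecidableEq Y] {S : F₂ X} {x : X}
    (hS : (S : Finset X) = univ.erase x) : ∃ y, (F S : Finset Y) = univ.erase y :=
  exists_isMax_covBy_iff_eq_univ_erase.1 <| F.exists_isMax_covBy_apply_iff.2 <|
    exists_isMax_covBy_iff_eq_univ_erase.2 ⟨x, hS⟩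

theorem exists_forall_mem_apply_iff (hX : 3 ≤ Fintype.card X) (x : X) :
    ∃ y, ∀ S : F₂ X, y ∈ (F S : Finset Y) ↔ x ∈ (S : Finset X) := by
  classical
  have hC : 2 ≤ #(univ.erase x) := by rw [card_erase_of_mem (mem_univ x), card_univ]; omega
  obtain ⟨y, hy⟩ := exists_apply_eq_univ_erase F (S := ⟨_, hC⟩) rfl
  refine ⟨y, fun S => ?_⟩
  have h := F.le_iff_le (x := S) (y := ⟨_, hC⟩)
  rw [← Subtype.coe_le_coe, ← Subtype.coe_le_coe, hy] at h
  simpa [subset_erase] using h.not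

theorem exists_equiv_apply_eq_image [DecidableEq Y] (hX : 3 ≤ Fintype.card X)
    (hXY : Fintype.card X = Fintype.card Y) :
    ∃ φ : X ≃ Y, ∀ S : F₂ X, (F S : Finset Y) = (S : Finset X).image φ := by
  choose φ hφ using exists_forall_mem_apply_iff F hX
  have hinj : Function.Injective φ := fun a b hab =>
    eq_of_forall_two_le_card_mem_iff hX fun S => by rw [← hφ a S, ← hφ b S, hab]
  have hbij := (Fintype.bijective_iff_injective_and_card φ).2 ⟨hinj, hXY⟩
  refine ⟨.ofBijective φ hbij, fun S => ext fun y => ?_⟩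
  obtain ⟨x, rfl⟩ := hbij.2 y
  rw [Equiv.coe_ofBijective, hinj.mem_finset_image, hφ]

end Finset

/-- Let `X` and `Y` be finite sets with `|X| = |Y| = n > 2`, and let `F` be an
order isomorphism between the posets `F₂(X)` and `F₂(Y)` of subsets of cardinality at least
two, ordered by inclusion. Then there exists a unique bijection `φ : X → Y` such that
`F(S) = φ[S]` for every subset `S` of `X` with at least two elements. -/
theorem orderIso_finset_two_induced_by_unique_bijection
    {X Y : Type*} [Fintype X] [Fintype Y] [DecidableEq Y] (n : ℕ)
    (hX : Fintype.card X = n) (hY : Fintype.card Y = n) (hn : 2 < n)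
    (F : {S : Finset X // 2 ≤ S.card} ≃o {S : Finset Y // 2 ≤ S.card}) :
    ∃! φ : X ≃ Y, ∀ S : {S : Finset X // 2 ≤ S.card},
      ((F S : Finset Y) = (S : Finset X).image φ) := by
  have hX3 : 3 ≤ Fintype.card X := by omega
  obtain ⟨φ, hφ⟩ := exists_equiv_apply_eq_image F hX3 (hX.trans hY.symm)
  exact ⟨φ, hφ, fun ψ hψ =>
    Equiv.eq_of_forall_image_two_le_card_eq hX3 fun S => (hψ S).symm.trans (hφ S)⟩
end

section
/- Let X and Y be compact Hausdorff spaces each with at least two points, and let F : F₂(X) → F₂(Y) be an order isomorphism between the posets of closed subsets with at least two elements, ordered by inclusion. Then there exists a homeomorphism φ : X → Y such that F(K) = φ[K] for all K ∈ F₂(X); moreover φ is unique if X has at least three points. -/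
/-!
Two-point sets are the minimal elements of `F₂(X)`, so `F` maps pairs to pairs. Distinct pairs
`A`, `B` meet iff `B ≤ A ⊔ C` for some pair `C ≠ B` (as in `{p, r} ≤ {p, q} ⊔ {q, r}`), so `F` and
`F⁻¹` preserve both meeting and disjointness of pairs. With three points this forces all pairs
`F {x, y}`, `y ≠ x`, through a common point `φ x`: if `p ∈ F {x, y} ∩ F {x, z}` but
`p ∉ F {x, w}`, then `F {y, z} ⊆ F {x, y} ∪ F {x, z} ⊆ {p} ∪ F {x, w}`, although `F {y, z}` is
disjoint from `F {x, w}`. The same construction for `F⁻¹` inverts `φ`; as every `K` is the union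
of its pairs, `F K = φ[K]`, so `φ` and its inverse are closed maps. With exactly two points `F₂` is
a singleton on both sides and any bijection works.
-/

open Set

lemma exists_ne_ne_of_three {α : Type*} (h3 : ∃ a b c : α, a ≠ b ∧ a ≠ c ∧ b ≠ c) (x : α) :
    ∃ y z, x ≠ y ∧ x ≠ z ∧ y ≠ z := by
  obtain ⟨a, b, c, hab, hac, hbc⟩ := h3
  rcases eq_or_ne x a with rfl | hxa
  · exact ⟨b, c, hab, hac, hbc⟩
  rcases eq_or_ne x b with rfl | hxb
  · exact ⟨a, c, hab.symm, hbc, hac⟩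
  exact ⟨a, b, hxa, hxb, hab⟩

lemma eq_univ_of_not_three {α : Type*} (h3 : ¬∃ a b c : α, a ≠ b ∧ a ≠ c ∧ b ≠ c)
    {s : Set α} (hs : s.Nontrivial) : s = univ := by
  obtain ⟨a, ha, b, hb, hab⟩ := hs
  refine eq_univ_of_forall fun c => ?_
  by_contra hc
  exact h3 ⟨a, b, c, hab, ne_of_mem_of_not_mem ha hc, ne_of_mem_of_not_mem hb hc⟩

lemma card_eq_two_of_not_three {α : Type*} (h2 : ∃ a b : α, a ≠ b)
    (h3 : ¬∃ a b c : α, a ≠ b ∧ a ≠ c ∧ b ≠ c) : Nat.card α = 2 :=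
  let ⟨a, b, hab⟩ := h2
  Nat.card_eq_two_iff.2 ⟨a, b, hab, eq_univ_of_not_three h3 (nontrivial_pair hab)⟩

abbrev ClosedNontrivial (X : Type*) [TopologicalSpace X] :=
  {K : Set X // IsClosed K ∧ K.Nontrivial}

namespace ClosedNontrivial

variable {X Y : Type*} [TopologicalSpace X] [TopologicalSpace Y]

instance : SemilatticeSup (ClosedNontrivial X) :=
  Subtype.semilatticeSup fun _ _ hK hL => ⟨hK.1.union hL.1, hK.2.mono subset_union_left⟩

@[simp] lemma coe_sup (K L : ClosedNontrivial X) :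
    ((K ⊔ L : ClosedNontrivial X) : Set X) = (K : Set X) ∪ L := rfl

lemma inter_nonempty_of_le_sup {A B C : ClosedNontrivial X} (hC : IsMin C) (hBC : B ≠ C)
    (hB : B ≤ A ⊔ C) : ((A : Set X) ∩ B).Nonempty := by
  by_contra hAB
  have hBle : B ≤ C := fun b hb => (hB hb).resolve_left fun ha => hAB ⟨b, ha, hb⟩
  exact hBC (le_antisymm hBle (hC hBle))

lemma isClosedMap_of_forall_apply_eq_image [T1Space Y]
    {F : ClosedNontrivial X → ClosedNontrivial Y} {f : X → Y}
    (hf : ∀ K, (F K : Set Y) = f '' K) : IsClosedMap f := fun C hC => by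
  rcases C.subsingleton_or_nontrivial with hs | hs
  · exact (hs.image f).isClosed
  · exact hf ⟨C, hC, hs⟩ ▸ (F _).2.1

section T1Domain

variable [T1Space X]

def pair (x y : X) (h : x ≠ y) : ClosedNontrivial X :=
  ⟨{x, y}, (toFinite _).isClosed, nontrivial_pair h⟩

@[simp] lemma coe_pair {x y : X} (h : x ≠ y) : (pair x y h : Set X) = {x, y} := rfl

lemma pair_le_iff {x y : X} (h : x ≠ y) {K : ClosedNontrivial X} :
    pair x y h ≤ K ↔ x ∈ (K : Set X) ∧ y ∈ (K : Set X) :=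
  insert_subset_iff.trans (and_congr_right' singleton_subset_iff)

lemma pair_ne_pair {x y z : X} (hxy : x ≠ y) (hxz : x ≠ z) (hyz : y ≠ z) :
    pair x y hxy ≠ pair x z hxz := fun h => by
  have := congrArg Subtype.val h
  simp only [coe_pair, pair_eq_pair_iff, true_and] at this
  exact this.elim hyz fun h => hxz h.1

lemma isMin_pair {x y : X} (h : x ≠ y) : IsMin (pair x y h) := fun K hK => by
  rcases K.2.2.nonempty.subset_pair_iff_eq.1 hK with h | h | h
  · exact absurd h K.2.2.ne_singleton
  · exact absurd h K.2.2.ne_singleton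
  · exact h.ge

lemma eq_pair_of_isMin {K : ClosedNontrivial X} (hK : IsMin K) {x y : X}
    (hx : x ∈ (K : Set X)) (hy : y ∈ (K : Set X)) (h : x ≠ y) : K = pair x y h :=
  have hle := (pair_le_iff h).2 ⟨hx, hy⟩
  le_antisymm (hK hle) hle

lemma exists_eq_pair_of_isMin {K : ClosedNontrivial X} (hK : IsMin K) {x : X}
    (hx : x ∈ (K : Set X)) : ∃ y, ∃ h : x ≠ y, K = pair x y h :=
  let ⟨y, hy, hyx⟩ := K.2.2.exists_ne x
  ⟨y, hyx.symm, eq_pair_of_isMin hK hx hy hyx.symm⟩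

lemma inter_subsingleton_of_isMin {A B : ClosedNontrivial X} (hA : IsMin A) (hB : IsMin B)
    (hAB : A ≠ B) : ((A : Set X) ∩ B).Subsingleton := fun x hx y hy => by
  by_contra h
  exact hAB ((eq_pair_of_isMin hA hx.1 hy.1 h).trans (eq_pair_of_isMin hB hx.2 hy.2 h).symm)

theorem nontrivial_iff_exists_three :
    Nontrivial (ClosedNontrivial X) ↔ ∃ x y z : X, x ≠ y ∧ x ≠ z ∧ y ≠ z := by
  refine ⟨fun ⟨K, L, hKL⟩ => ?_, fun ⟨x, y, z, hxy, hxz, hyz⟩ =>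
    ⟨pair x y hxy, pair x z hxz, pair_ne_pair hxy hxz hyz⟩⟩
  by_contra h3
  exact hKL (Subtype.ext
    ((eq_univ_of_not_three h3 K.2.2).trans (eq_univ_of_not_three h3 L.2.2).symm))

variable (F : ClosedNontrivial X ≃o ClosedNontrivial Y)

lemma inter_nonempty_apply {A B : ClosedNontrivial X} (hA : IsMin A) (hB : IsMin B)
    (hAB : A ≠ B) (h : ((A : Set X) ∩ B).Nonempty) : ((F A : Set Y) ∩ F B).Nonempty := by
  obtain ⟨p, hpA, hpB⟩ := h
  obtain ⟨q, hpq, rfl⟩ := exists_eq_pair_of_isMin hA hpA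
  obtain ⟨r, hpr, rfl⟩ := exists_eq_pair_of_isMin hB hpB
  have hqr : q ≠ r := by rintro rfl; exact hAB rfl
  refine inter_nonempty_of_le_sup (F.isMin_apply.2 (isMin_pair hqr)) ?_ ?_
  · refine F.injective.ne fun h => ?_
    have hp : p ∈ (pair q r hqr : Set X) := h ▸ mem_insert p {r}
    rcases hp with h | h
    exacts [hpq h, hpr h]
  · rw [← F.map_sup]
    refine F.monotone fun s hs => ?_
    simp only [coe_pair, coe_sup, mem_union, mem_insert_iff, mem_singleton_iff] at hs ⊢
    tauto

def IsImagePoint (x : X) (p : Y) : Prop :=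
  ∀ y (h : x ≠ y), p ∈ (F (pair x y h) : Set Y)

variable {F}

lemma IsImagePoint.mem_apply {x : X} {p : Y} (hp : IsImagePoint F x p)
    {K : ClosedNontrivial X} (hx : x ∈ (K : Set X)) : p ∈ (F K : Set Y) :=
  let ⟨y, hy, hyx⟩ := K.2.2.exists_ne x
  F.monotone ((pair_le_iff hyx.symm).2 ⟨hx, hy⟩) (hp y hyx.symm)

lemma isImagePoint_of_forall_apply_eq_image {f : X → Y} (hf : ∀ K, (F K : Set Y) = f '' K)
    (x : X) : IsImagePoint F x (f x) := fun y _ =>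
  hf _ ▸ mem_image_of_mem f (mem_insert x {y})

end T1Domain

lemma disjoint_apply [T1Space Y] (F : ClosedNontrivial X ≃o ClosedNontrivial Y)
    {A B : ClosedNontrivial X} (hA : IsMin A) (hB : IsMin B) (h : Disjoint (A : Set X) B) :
    Disjoint (F A : Set Y) (F B) := by
  have hAB : A ≠ B := by rintro rfl; exact A.2.2.nonempty.ne_empty (disjoint_self.1 h)
  by_contra hF
  have := inter_nonempty_apply F.symm (F.isMin_apply.2 hA) (F.isMin_apply.2 hB)
    (F.injective.ne hAB) (not_disjoint_iff_nonempty_inter.1 hF)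
  simp only [OrderIso.symm_apply_apply] at this
  exact not_disjoint_iff_nonempty_inter.2 this h

section T1

variable [T1Space X] [T1Space Y] (F : ClosedNontrivial X ≃o ClosedNontrivial Y)

lemma exists_three_iff_of_equiv (e : ClosedNontrivial X ≃ ClosedNontrivial Y) :
    (∃ a b c : X, a ≠ b ∧ a ≠ c ∧ b ≠ c) ↔ ∃ p q r : Y, p ≠ q ∧ p ≠ r ∧ q ≠ r := by
  rw [← nontrivial_iff_exists_three, ← nontrivial_iff_exists_three]
  exact e.nontrivial_congr

lemma apply_pair_subset_insert {x v w : X} (hxv : x ≠ v) (hxw : x ≠ w) (hvw : v ≠ w) {p : Y}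
    (hpv : p ∈ (F (pair x v hxv) : Set Y)) (hpw : p ∉ (F (pair x w hxw) : Set Y)) :
    (F (pair x v hxv) : Set Y) ⊆ insert p (F (pair x w hxw)) := by
  obtain ⟨c, _, hc⟩ := exists_eq_pair_of_isMin (F.isMin_apply.2 (isMin_pair hxv)) hpv
  obtain ⟨r, hrv, hrw⟩ := inter_nonempty_apply F (isMin_pair hxv) (isMin_pair hxw)
    (pair_ne_pair hxv hxw hvw) ⟨x, mem_insert x {v}, mem_insert x {w}⟩
  rw [hc, coe_pair] at hrv ⊢
  rcases hrv with rfl | rfl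
  · exact absurd hrw hpw
  · exact insert_subset_insert (singleton_subset_iff.2 hrw)

lemma inter_subset_apply_pair {x y z w : X} (hxy : x ≠ y) (hxz : x ≠ z) (hxw : x ≠ w)
    (hyz : y ≠ z) (hyw : y ≠ w) (hzw : z ≠ w) :
    (F (pair x y hxy) : Set Y) ∩ F (pair x z hxz) ⊆ F (pair x w hxw) := by
  rintro p ⟨hpy, hpz⟩
  by_contra hpw
  have hcover : (F (pair y z hyz) : Set Y) ⊆ insert p (F (pair x w hxw)) :=
    calc (F (pair y z hyz) : Set Y)
        ⊆ F (pair x y hxy ⊔ pair x z hxz) :=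
          F.monotone ((pair_le_iff hyz).2
            ⟨Or.inl (mem_insert_of_mem x rfl), Or.inr (mem_insert_of_mem x rfl)⟩)
      _ = (F (pair x y hxy) : Set Y) ∪ F (pair x z hxz) := by rw [F.map_sup, coe_sup]
      _ ⊆ insert p (F (pair x w hxw)) :=
          union_subset (apply_pair_subset_insert F hxy hxw hyw hpy hpw)
            (apply_pair_subset_insert F hxz hxw hzw hpz hpw)
  have hdisj := disjoint_apply F (isMin_pair hyz) (isMin_pair hxw)
    (by simp [hxy, hxz, hyw.symm, hzw.symm])
  refine (F (pair y z hyz)).2.2.not_subset_singleton (x := p) fun q hq => ?_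
  exact (hcover hq).resolve_right (hdisj.notMem_of_mem_left hq)

lemma exists_isImagePoint (h3 : ∃ a b c : X, a ≠ b ∧ a ≠ c ∧ b ≠ c) (x : X) :
    ∃ p, IsImagePoint F x p := by
  obtain ⟨y, z, hxy, hxz, hyz⟩ := exists_ne_ne_of_three h3 x
  obtain ⟨p, hp⟩ := inter_nonempty_apply F (isMin_pair hxy) (isMin_pair hxz)
    (pair_ne_pair hxy hxz hyz) ⟨x, mem_insert x {y}, mem_insert x {z}⟩
  refine ⟨p, fun w hxw => ?_⟩
  rcases eq_or_ne y w with rfl | hyw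
  · exact hp.1
  rcases eq_or_ne z w with rfl | hzw
  · exact hp.2
  exact inter_subset_apply_pair F hxy hxz hxw hyz hyw hzw hp

variable {F}

lemma IsImagePoint.unique (h3 : ∃ a b c : X, a ≠ b ∧ a ≠ c ∧ b ≠ c) {x : X} {p q : Y}
    (hp : IsImagePoint F x p) (hq : IsImagePoint F x q) : p = q := by
  obtain ⟨y, z, hxy, hxz, hyz⟩ := exists_ne_ne_of_three h3 x
  exact inter_subsingleton_of_isMin (F.isMin_apply.2 (isMin_pair hxy))
    (F.isMin_apply.2 (isMin_pair hxz)) (F.injective.ne (pair_ne_pair hxy hxz hyz))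
    ⟨hp y hxy, hp z hxz⟩ ⟨hq y hxy, hq z hxz⟩

lemma IsImagePoint.eq_of_isImagePoint_symm (h3 : ∃ a b c : X, a ≠ b ∧ a ≠ c ∧ b ≠ c)
    {x x' : X} {p : Y} (hp : IsImagePoint F x p) (hx' : IsImagePoint F.symm p x') : x' = x := by
  -- `F.symm` sends each pair `F {x, y}` through `p` back to `{x, y}`
  have hmem : ∀ y (hxy : x ≠ y), x' = x ∨ x' = y := fun y hxy => by
    obtain ⟨q, hpq, hq⟩ := exists_eq_pair_of_isMin (F.isMin_apply.2 (isMin_pair hxy)) (hp y hxy)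
    simpa [← hq] using hx' q hpq
  obtain ⟨y, z, hxy, hxz, hyz⟩ := exists_ne_ne_of_three h3 x
  rcases hmem y hxy with h | rfl
  · exact h
  rcases hmem z hxz with h | rfl
  · exact h
  exact absurd rfl hyz

lemma forall_apply_eq_image_of_isImagePoint (e : X ≃ Y) (he : ∀ x, IsImagePoint F x (e x))
    (he' : ∀ p, IsImagePoint F.symm p (e.symm p)) (K : ClosedNontrivial X) :
    (F K : Set Y) = e '' K := by
  refine subset_antisymm (fun p hp => ⟨e.symm p, ?_, e.apply_symm_apply p⟩)
    (image_subset_iff.2 fun x hx => (he x).mem_apply hx)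
  simpa using (he' p).mem_apply hp

lemma eq_of_forall_apply_eq_image (h3 : ∃ a b c : X, a ≠ b ∧ a ≠ c ∧ b ≠ c) {f g : X → Y}
    (hf : ∀ K, (F K : Set Y) = f '' K) (hg : ∀ K, (F K : Set Y) = g '' K) : f = g :=
  funext fun x => (isImagePoint_of_forall_apply_eq_image hf x).unique h3
    (isImagePoint_of_forall_apply_eq_image hg x)

variable (F)

theorem exists_homeomorph_of_three (h3 : ∃ a b c : X, a ≠ b ∧ a ≠ c ∧ b ≠ c) :
    ∃ φ : X ≃ₜ Y, ∀ K, (F K : Set Y) = φ '' K := by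
  have h3Y := (exists_three_iff_of_equiv F.toEquiv).1 h3
  choose φ hφ using exists_isImagePoint F h3
  choose ψ hψ using exists_isImagePoint F.symm h3Y
  let e : X ≃ Y := ⟨φ, ψ, fun x => (hφ x).eq_of_isImagePoint_symm h3 (hψ _),
    fun p => (hψ p).eq_of_isImagePoint_symm h3Y (hφ _)⟩
  have he := forall_apply_eq_image_of_isImagePoint e hφ hψ
  have he' := forall_apply_eq_image_of_isImagePoint (F := F.symm) e.symm hψ hφ
  refine ⟨e.toHomeomorphOfContinuousClosed (continuous_iff_isClosed.2 fun C hC => ?_)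
    (isClosedMap_of_forall_apply_eq_image he), he⟩
  rw [← e.image_symm_eq_preimage]
  exact isClosedMap_of_forall_apply_eq_image he' C hC

theorem exists_homeomorph_of_not_three (hX : ∃ a b : X, a ≠ b)
    (h3 : ¬∃ a b c : X, a ≠ b ∧ a ≠ c ∧ b ≠ c) :
    ∃ φ : X ≃ₜ Y, ∀ K, (F K : Set Y) = φ '' K := by
  obtain ⟨a, b, hab⟩ := hX
  have h3Y := mt (exists_three_iff_of_equiv F.toEquiv).2 h3
  obtain ⟨p, -, q, -, hpq⟩ := (F (pair a b hab)).2.2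
  have hcardX := card_eq_two_of_not_three ⟨a, b, hab⟩ h3
  have hcardY := card_eq_two_of_not_three ⟨p, q, hpq⟩ h3Y
  have : Finite X := Nat.finite_of_card_ne_zero (by omega)
  have : Finite Y := Nat.finite_of_card_ne_zero (by omega)
  obtain ⟨e⟩ := Finite.card_eq.1 (hcardX.trans hcardY.symm)
  refine ⟨e.toHomeomorphOfDiscrete, fun K => ?_⟩
  rw [eq_univ_of_not_three h3Y (F K).2.2, eq_univ_of_not_three h3 K.2.2,
    image_univ_of_surjective (Homeomorph.surjective _)]

end T1

end ClosedNontrivial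

theorem orderIso_closed_nontrivial_induced_by_homeomorph_general
    {X Y : Type*} [TopologicalSpace X] [T2Space X]
    [TopologicalSpace Y] [T2Space Y]
    (hX : ∃ x y : X, x ≠ y)
    (F : {K : Set X // IsClosed K ∧ K.Nontrivial} ≃o
         {K : Set Y // IsClosed K ∧ K.Nontrivial}) :
    ∃ φ : X ≃ₜ Y,
      (∀ K : {K : Set X // IsClosed K ∧ K.Nontrivial}, (F K : Set Y) = φ '' (K : Set X)) ∧
      ((∃ x y z : X, x ≠ y ∧ x ≠ z ∧ y ≠ z) →
        ∀ ψ : X ≃ₜ Y,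
          (∀ K : {K : Set X // IsClosed K ∧ K.Nontrivial},
            (F K : Set Y) = ψ '' (K : Set X)) → ψ = φ) := by
  by_cases h3 : ∃ x y z : X, x ≠ y ∧ x ≠ z ∧ y ≠ z
  · obtain ⟨φ, hφ⟩ := ClosedNontrivial.exists_homeomorph_of_three F h3
    exact ⟨φ, hφ, fun _ ψ hψ => Homeomorph.ext
      (congrFun (ClosedNontrivial.eq_of_forall_apply_eq_image h3 hψ hφ))⟩
  · obtain ⟨φ, hφ⟩ := ClosedNontrivial.exists_homeomorph_of_not_three F hX h3
    exact ⟨φ, hφ, fun h => absurd h h3⟩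

/-- Let `X` and `Y` be compact Hausdorff spaces each with at least two points,
and let `F : F₂(X) → F₂(Y)` be an order isomorphism between the posets of closed subsets
with at least two elements, ordered by inclusion. Then there exists a homeomorphism
`φ : X → Y` such that `F(K) = φ[K]` for all `K ∈ F₂(X)`; moreover `φ` is unique if `X` has
at least three points. -/
theorem orderIso_closed_nontrivial_induced_by_homeomorph
    {X Y : Type*} [TopologicalSpace X] [CompactSpace X] [T2Space X]
    [TopologicalSpace Y] [CompactSpace Y] [T2Space Y]
    (hX : ∃ x y : X, x ≠ y) (hY : ∃ x y : Y, x ≠ y)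
    (F : {K : Set X // IsClosed K ∧ K.Nontrivial} ≃o
         {K : Set Y // IsClosed K ∧ K.Nontrivial}) :
    ∃ φ : X ≃ₜ Y,
      (∀ K : {K : Set X // IsClosed K ∧ K.Nontrivial}, (F K : Set Y) = φ '' (K : Set X)) ∧
      ((∃ x y z : X, x ≠ y ∧ x ≠ z ∧ y ≠ z) →
        ∀ ψ : X ≃ₜ Y,
          (∀ K : {K : Set X // IsClosed K ∧ K.Nontrivial},
            (F K : Set Y) = ψ '' (K : Set X)) → ψ = φ) :=
  orderIso_closed_nontrivial_induced_by_homeomorph_general hX F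
end

section
/- Let X be a compact Hausdorff space with at least two points, x ∈ X a non-isolated point, and F : F₂(X) → F₂(Y) an order isomorphism (Y compact Hausdorff with at least two points). Then the intersection over all open neighborhoods O of x of the sets F(cl(O)) is a singleton. -/
/-!
The sets `F (cl O)` form a downward directed family of nonempty closed subsets of the compact
space `Y`, so they have a common point. If they had two common points `y ≠ y'`, then the pair
`{y, y'}` lies in `F₂(Y)` and below every `F (cl O)`, hence `F⁻¹ {y, y'}` lies below every
`cl O`. In a Hausdorff space the closures of the neighbourhoods of `x` meet only in `x`, which
contradicts `F⁻¹ {y, y'}` having two points.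
-/

open Set

section

variable {X Y : Type*} [TopologicalSpace X] [TopologicalSpace Y]

theorem IsOpen.nontrivial_of_not_isOpen_singleton {x : X} (hx : ¬IsOpen ({x} : Set X))
    {O : Set X} (hO : IsOpen O) (hxO : x ∈ O) : O.Nontrivial := by
  by_contra h
  exact hx (not_nontrivial_iff.1 h |>.eq_singleton_of_mem hxO ▸ hO)

theorem eq_of_forall_isOpen_mem_closure [T2Space X] {x z : X}
    (h : ∀ O : Set X, IsOpen O → x ∈ O → z ∈ closure O) : z = x := by
  by_contra hzx
  obtain ⟨u, v, hu, hv, hxu, hzv, huv⟩ := t2_separation (Ne.symm hzx)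
  exact closure_minimal huv.subset_compl_right hv.isClosed_compl (h u hu hxu) hzv

theorem exists_forall_mem_image_closure_of_monotone [CompactSpace Y] {x : X}
    (hx : ¬IsOpen ({x} : Set X)) {F : ClosedNontrivial X → ClosedNontrivial Y}
    (hF : Monotone F) :
    ∃ y : Y, ∀ O : Set X, IsOpen O → x ∈ O → ∀ hnt : (closure O).Nontrivial,
      y ∈ (F ⟨closure O, isClosed_closure, hnt⟩ : Set Y) := by
  let ι := {O : Set X // IsOpen O ∧ x ∈ O}
  have : Nonempty ι := ⟨⟨univ, isOpen_univ, mem_univ x⟩⟩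
  let t : ι → Set Y := fun O => F ⟨closure O.1, isClosed_closure,
    (O.2.1.nontrivial_of_not_isOpen_singleton hx O.2.2).mono subset_closure⟩
  have hdir : Directed (· ⊇ ·) t := fun O₁ O₂ =>
    ⟨⟨O₁.1 ∩ O₂.1, O₁.2.1.inter O₂.2.1, O₁.2.2, O₂.2.2⟩,
      hF (closure_mono inter_subset_left), hF (closure_mono inter_subset_right)⟩
  obtain ⟨y, hy⟩ := IsCompact.nonempty_iInter_of_directed_nonempty_isCompact_isClosed t hdir
    (fun _ => (F _).2.2.nonempty) (fun _ => (F _).2.1.isCompact) (fun _ => (F _).2.1)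
  exact ⟨y, fun O hO hxO _ => mem_iInter.1 hy ⟨O, hO, hxO⟩⟩

theorem eq_of_forall_mem_image_closure [T2Space X] [T1Space Y] {x : X}
    (hx : ¬IsOpen ({x} : Set X)) (F : ClosedNontrivial X ≃o ClosedNontrivial Y) {y y' : Y}
    (hy : ∀ O : Set X, IsOpen O → x ∈ O → ∀ hnt : (closure O).Nontrivial,
      y ∈ (F ⟨closure O, isClosed_closure, hnt⟩ : Set Y))
    (hy' : ∀ O : Set X, IsOpen O → x ∈ O → ∀ hnt : (closure O).Nontrivial,
      y' ∈ (F ⟨closure O, isClosed_closure, hnt⟩ : Set Y)) :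
    y' = y := by
  by_contra hne
  let P : ClosedNontrivial Y := ⟨{y', y}, (toFinite _).isClosed, nontrivial_pair hne⟩
  have hle_closure : ∀ O : Set X, IsOpen O → x ∈ O → (F.symm P : Set X) ⊆ closure O := by
    intro O hO hxO
    have hnt := (hO.nontrivial_of_not_isOpen_singleton hx hxO).mono subset_closure
    have hP : P ≤ F ⟨closure O, isClosed_closure, hnt⟩ :=
      pair_subset (hy' O hO hxO hnt) (hy O hO hxO hnt)
    exact F.symm_apply_le.2 hP
  have hsub : (F.symm P : Set X) ⊆ {x} := fun z hz =>
    eq_of_forall_isOpen_mem_closure fun O hO hxO => hle_closure O hO hxO hz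
  exact (F.symm P).2.2.not_subset_singleton hsub

end

theorem inter_image_closure_nbhds_singleton_general
    {X Y : Type*} [TopologicalSpace X] [T2Space X]
    [TopologicalSpace Y] [CompactSpace Y] [T2Space Y]
    (x : X) (hx : ¬IsOpen ({x} : Set X))
    (F : {K : Set X // IsClosed K ∧ K.Nontrivial} ≃o
         {K : Set Y // IsClosed K ∧ K.Nontrivial}) :
    ∃! y : Y, ∀ (O : Set X) (hO : IsOpen O) (hxO : x ∈ O)
      (hnt : (closure O).Nontrivial),
      y ∈ (F ⟨closure O, isClosed_closure, hnt⟩ : Set Y) := by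
  obtain ⟨y, hy⟩ := exists_forall_mem_image_closure_of_monotone hx F.monotone
  exact ⟨y, hy, fun _ hy' => eq_of_forall_mem_image_closure hx F hy hy'⟩

/-- Let `X` be a compact Hausdorff space with at least two points, `x ∈ X` a
non-isolated point, and `F : F₂(X) → F₂(Y)` an order isomorphism, where `Y` is compact
Hausdorff with at least two points and `F₂` denotes the poset of closed subsets with at
least two elements ordered by inclusion. Then the intersection over all open neighborhoods
`O` of `x` of the sets `F(cl O)` is a singleton. -/
theorem inter_image_closure_nbhds_singleton
    {X Y : Type*} [TopologicalSpace X] [CompactSpace X] [T2Space X]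
    [TopologicalSpace Y] [CompactSpace Y] [T2Space Y]
    (hX : ∃ x y : X, x ≠ y) (hY : ∃ x y : Y, x ≠ y)
    (x : X) (hx : ¬IsOpen ({x} : Set X))
    (F : {K : Set X // IsClosed K ∧ K.Nontrivial} ≃o
         {K : Set Y // IsClosed K ∧ K.Nontrivial}) :
    ∃! y : Y, ∀ (O : Set X) (hO : IsOpen O) (hxO : x ∈ O)
      (hnt : (closure O).Nontrivial),
      y ∈ (F ⟨closure O, isClosed_closure, hnt⟩ : Set Y) :=
  inter_image_closure_nbhds_singleton_general x hx F
end

section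
/- Let A be a unital C*-algebra. The atoms of the poset C(A) of unital commutative C*-subalgebras are exactly the subalgebras of the form C*(e, 1) = span{e, 1} for a projection e ∈ A with e ≠ 0 and e ≠ 1; equivalently, the atoms are exactly the two-dimensional elements of C(A). -/
/-- The poset `C(A)` of commutative unital C*-subalgebras of `A` (topologically closed
commutative *-subalgebras containing the unit), ordered by inclusion. -/
abbrev CommCStarSub (A : Type*) [CStarAlgebra A] :=
  {C : StarSubalgebra ℂ A // IsClosed (C : Set A) ∧ ∀ x ∈ C, ∀ y ∈ C, x * y = y * x}

/-!
A non-scalar element `a` of an atom `C` generates `C`, and so does every non-scalar continuous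
function of `a`. If `σ(a)` contained three points `s, t, u`, then `f z = (z - s) * (z - t)` would
be non-scalar on `σ(a)` while identifying `s` and `t`, so `a` could not be a continuous function
of `f a`, although `a ∈ C*(f a) = C`. Hence `σ(a) = {s, t}`, the spectral projection `e` of `a` at
`t` is a non-scalar element of `C`, and `C = C*(e) = span {1, e}`. Conversely `span {1, e}` is
two-dimensional, and a two-dimensional algebra has no proper subalgebra other than the scalars.
-/

open StarAlgebra Module

section Algebra

variable {K A : Type*} [Field K] [Ring A] [Algebra K A]

theorem IsIdempotentElem.notMem_range_algebraMap {e : A} (he : IsIdempotentElem e)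
    (h0 : e ≠ 0) (h1 : e ≠ 1) : e ∉ Set.range (algebraMap K A) := by
  rintro ⟨c, rfl⟩
  have : Nontrivial A := ⟨⟨_, 0, h0⟩⟩
  have hc : IsIdempotentElem c :=
    FaithfulSMul.algebraMap_injective K A (by rw [map_mul]; exact he)
  rcases IsIdempotentElem.iff_eq_zero_or_one.1 hc with rfl | rfl
  · exact h0 (map_zero _)
  · exact h1 (map_one _)

theorem Subalgebra.finrank_eq_two_of_coe_eq {S : Subalgebra K A} {e : A}
    (he : e ∉ Set.range (algebraMap K A))
    (hS : (S : Set A) = {x | ∃ μ ν : K, x = μ • 1 + ν • e}) : finrank K S = 2 := by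
  have : Nontrivial A := ⟨⟨e, algebraMap K A 0, fun h => he ⟨0, h.symm⟩⟩⟩
  have hli : LinearIndependent K ![1, e] :=
    (LinearIndependent.pair_iff' one_ne_zero).2 fun c hc =>
      he ⟨c, by rw [Algebra.algebraMap_eq_smul_one, hc]⟩
  have hspan : Subalgebra.toSubmodule S = Submodule.span K (Set.range ![1, e]) := by
    ext x
    rw [Matrix.range_cons_cons_empty, Submodule.mem_span_pair, Subalgebra.mem_toSubmodule,
      ← SetLike.mem_coe, hS]
    simp only [Set.mem_ofPred_eq, eq_comm]
  rw [← Subalgebra.finrank_toSubmodule, hspan, finrank_span_eq_card hli, Fintype.card_fin]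

theorem Subalgebra.eq_bot_of_lt_of_finrank_eq_two {S T : Subalgebra K A} (hST : S < T)
    (hT : finrank K T = 2) : S = ⊥ := by
  have : FiniteDimensional K T := .of_finrank_eq_succ hT
  have : Nontrivial T := nontrivial_of_finrank_pos (hT ▸ two_pos)
  have : Nontrivial A := Function.Injective.nontrivial (f := ((↑) : T → A)) Subtype.val_injective
  have hlt := Submodule.finrank_lt_finrank_of_lt (s := Subalgebra.toSubmodule S)
    (t := Subalgebra.toSubmodule T) hST
  rw [Subalgebra.finrank_toSubmodule, Subalgebra.finrank_toSubmodule, hT] at hlt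
  have : FiniteDimensional K S := .of_injective (Subalgebra.inclusion hST.le).toLinearMap
    (Subalgebra.inclusion_injective hST.le)
  have hpos : 0 < finrank K S := finrank_pos
  exact Subalgebra.finrank_eq_one_iff.1 (by omega)

end Algebra

section CFC

variable {A : Type*} [CStarAlgebra A]

theorem exists_continuousOn_cfc_eq_of_mem_elemental {a x : A} [IsStarNormal a]
    (hx : x ∈ elemental ℂ a) :
    ∃ f : ℂ → ℂ, ContinuousOn f (spectrum ℂ a) ∧ cfc f a = x := by
  obtain ⟨f, rfl⟩ : x ∈ Set.range (cfc · a) := by rwa [range_cfc ℂ ‹IsStarNormal a›]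
  by_cases hf : ContinuousOn f (spectrum ℂ a)
  · exact ⟨f, hf, rfl⟩
  -- `cfc f a` is the junk value `0` when `f` is discontinuous on the spectrum
  · exact ⟨0, continuousOn_const, (cfc_zero ℂ a).trans (cfc_apply_of_not_continuousOn a hf).symm⟩

theorem injOn_of_mem_elemental_cfc {a : A} [IsStarNormal a] {f : ℂ → ℂ}
    (hf : ContinuousOn f (spectrum ℂ a)) (ha : a ∈ elemental ℂ (cfc f a)) :
    (spectrum ℂ a).InjOn f := by
  obtain ⟨g, hg, hga⟩ := exists_continuousOn_cfc_eq_of_mem_elemental ha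
  rw [cfc_map_spectrum f a] at hg
  have hgf : (spectrum ℂ a).LeftInvOn g f := by
    refine eqOn_of_cfc_eq_cfc ?_ (hg.comp hf (Set.mapsTo_image f _))
    rw [cfc_comp' g f a, hga, cfc_id' ℂ a]
  exact hgf.injOn

theorem cfc_notMem_bot {a : A} [IsStarNormal a] {f : ℂ → ℂ}
    (hf : ContinuousOn f (spectrum ℂ a)) {s t : ℂ} (hs : s ∈ spectrum ℂ a)
    (ht : t ∈ spectrum ℂ a) (hst : f s ≠ f t) :
    cfc f a ∉ (⊥ : StarSubalgebra ℂ A) := by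
  rintro ⟨c, hc⟩
  have hfc := eqOn_of_cfc_eq_cfc (a := a) ((cfc_const c a).trans hc)
  exact hst ((hfc hs).symm.trans (hfc ht))

theorem spectrum_nontrivial_of_notMem_bot {a : A} [IsStarNormal a]
    (ha : a ∉ (⊥ : StarSubalgebra ℂ A)) : (spectrum ℂ a).Nontrivial := by
  by_contra h
  obtain ⟨t, ht⟩ : ∃ t, spectrum ℂ a ⊆ {t} := by
    rcases (Set.not_nontrivial_iff.1 h).eq_empty_or_singleton with h0 | ⟨t, ht⟩
    · exact ⟨0, h0.subset.trans (Set.empty_subset _)⟩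
    · exact ⟨t, ht.subset⟩
  exact ha ⟨t, (CFC.eq_algebraMap_of_spectrum_subset_singleton a t ht).symm⟩

theorem IsStarProjection.coe_elemental {e : A} (he : IsStarProjection e) :
    (elemental ℂ e : Set A) = {x | ∃ μ ν : ℂ, x = μ • 1 + ν • e} := by
  have : IsStarNormal e := he.isStarNormal
  ext x
  constructor
  · intro hx
    obtain ⟨f, -, rfl⟩ := exists_continuousOn_cfc_eq_of_mem_elemental hx
    refine ⟨f 0, f 1 - f 0, ?_⟩
    have hspec := (isStarProjection_iff_spectrum_subset_and_isStarNormal.1 he).1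
    rw [cfc_congr (g := fun z => f 0 + (f 1 - f 0) * z) fun z hz => ?_,
      cfc_const_add (f 0) (fun z => (f 1 - f 0) * z) e, cfc_const_mul_id (f 1 - f 0) e,
      Algebra.algebraMap_eq_smul_one]
    rcases hspec hz with rfl | rfl <;> simp
  · rintro ⟨μ, ν, rfl⟩
    exact add_mem (Subalgebra.smul_mem _ (one_mem _) μ)
      (Subalgebra.smul_mem _ (elemental.self_mem ℂ e) ν)

end CFC

theorem StarSubalgebra.isClosed_bot {A : Type*} [NormedRing A] [NormedAlgebra ℂ A] [StarRing A]
    [StarModule ℂ A] : IsClosed ((⊥ : StarSubalgebra ℂ A) : Set A) := by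
  rw [StarSubalgebra.coe_bot, ← Algebra.coe_linearMap, ← LinearMap.coe_range]
  exact Submodule.closed_of_finiteDimensional _

namespace CommCStarSub

variable {A : Type*} [CStarAlgebra A]

instance : OrderBot (CommCStarSub A) where
  bot := ⟨⊥, StarSubalgebra.isClosed_bot, by
    rintro - ⟨c, rfl⟩ y -
    exact Algebra.commutes c y⟩
  bot_le C := (bot_le : ⊥ ≤ C.val)

theorem val_bot : (⊥ : CommCStarSub A).val = ⊥ := rfl

theorem isAtom_iff {C : CommCStarSub A} :
    IsAtom C ↔ (C.val : Set A) ≠ Set.range (algebraMap ℂ A) ∧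
      ∀ D : CommCStarSub A, D < C → (D.val : Set A) = Set.range (algebraMap ℂ A) := by
  simp only [IsAtom, ne_eq, Subtype.ext_iff, val_bot, ← StarSubalgebra.coe_bot, SetLike.coe_set_eq]

theorem isStarNormal_of_mem {C : CommCStarSub A} {a : A} (ha : a ∈ C.val) : IsStarNormal a :=
  ⟨C.2.2 _ (star_mem ha) _ ha⟩

theorem elemental_eq_of_isAtom {C : CommCStarSub A} (hC : IsAtom C) {a : A} (ha : a ∈ C.val)
    (ha' : a ∉ (⊥ : StarSubalgebra ℂ A)) : elemental ℂ a = C.val := by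
  have hle : elemental ℂ a ≤ C.val := elemental.le_of_mem C.2.1 ha
  let D : CommCStarSub A :=
    ⟨elemental ℂ a, elemental.isClosed ℂ a, fun x hx y hy => C.2.2 x (hle hx) y (hle hy)⟩
  rcases hC.le_iff.1 (show D ≤ C from hle) with hD | hD
  · rw [← val_bot, ← hD] at ha'
    exact absurd (elemental.self_mem ℂ a) ha'
  · exact congrArg Subtype.val hD

theorem spectrum_subset_pair_of_isAtom {C : CommCStarSub A} (hC : IsAtom C) {a : A}
    (ha : a ∈ C.val) {s t : ℂ} (hs : s ∈ spectrum ℂ a) (ht : t ∈ spectrum ℂ a) (hst : s ≠ t) :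
    spectrum ℂ a ⊆ {s, t} := by
  have : IsStarNormal a := isStarNormal_of_mem ha
  have : IsClosed (C.val : Set A) := C.2.1
  intro u hu
  by_contra hu'
  simp only [Set.mem_insert_iff, Set.mem_singleton_iff, not_or] at hu'
  let f : ℂ → ℂ := fun z => (z - s) * (z - t)
  have hf : Continuous f := by fun_prop
  have hfC : cfc f a ∈ C.val := cfc_mem f ha
  have hf' : cfc f a ∉ (⊥ : StarSubalgebra ℂ A) := cfc_notMem_bot hf.continuousOn hs hu
    (by simp [f, sub_ne_zero.2 hu'.1, sub_ne_zero.2 hu'.2])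
  have haf : a ∈ elemental ℂ (cfc f a) := elemental_eq_of_isAtom hC hfC hf' ▸ ha
  exact hst (injOn_of_mem_elemental_cfc hf.continuousOn haf hs ht (by simp [f]))

theorem exists_isStarProjection_of_isAtom {C : CommCStarSub A} (hC : IsAtom C) :
    ∃ e ∈ C.val, IsStarProjection e ∧ e ∉ (⊥ : StarSubalgebra ℂ A) := by
  have : IsClosed (C.val : Set A) := C.2.1
  obtain ⟨a, ha, ha'⟩ := SetLike.exists_of_lt (bot_lt_iff_ne_bot.2 fun h => hC.1 (Subtype.ext h))
  have : IsStarNormal a := isStarNormal_of_mem ha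
  obtain ⟨s, hs, t, ht, hst⟩ := spectrum_nontrivial_of_notMem_bot ha'
  have hspec := spectrum_subset_pair_of_isAtom hC ha hs ht hst
  obtain ⟨g, hg, hgs, hgt⟩ : ∃ g : ℂ → ℂ, Continuous g ∧ g s = 0 ∧ g t = 1 :=
    ⟨fun z => (z - s) / (t - s), by fun_prop, by simp, div_self (sub_ne_zero.2 hst.symm)⟩
  refine ⟨cfc g a, cfc_mem g ha, ?_,
    cfc_notMem_bot hg.continuousOn hs ht (by rw [hgs, hgt]; exact zero_ne_one)⟩
  rw [isStarProjection_iff_spectrum_subset_and_isStarNormal, cfc_map_spectrum g a]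
  refine ⟨?_, inferInstance⟩
  rintro - ⟨z, hz, rfl⟩
  rcases hspec hz with rfl | rfl <;> simp [hgs, hgt]

theorem isAtom_of_finrank_eq_two {C : CommCStarSub A} (h : finrank ℂ C.val = 2) : IsAtom C := by
  refine ⟨fun hC => ?_, fun D hD => Subtype.ext <| StarSubalgebra.toSubalgebra_injective <|
    Subalgebra.eq_bot_of_lt_of_finrank_eq_two (T := C.val.toSubalgebra) hD h⟩
  have : Nontrivial C.val := nontrivial_of_finrank_pos (h ▸ two_pos)
  have : Nontrivial A := Function.Injective.nontrivial (f := ((↑) : C.val → A))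
    Subtype.val_injective
  rw [hC, val_bot] at h
  exact absurd (h.symm.trans (Subalgebra.finrank_bot (F := ℂ) (E := A))) (by norm_num)

end CommCStarSub

/-- Let `A` be a unital C*-algebra. The atoms of the poset `C(A)` of unital
commutative C*-subalgebras (whose bottom element is the scalars `ℂ·1`, the range of the
algebra map) are exactly the subalgebras of the form `C*(e,1) = span{1, e}` for a
projection `e ∈ A` with `e ≠ 0` and `e ≠ 1`; equivalently, the atoms are exactly the
two-dimensional elements of `C(A)`. -/
theorem atoms_of_commCStarSub
    {A : Type*} [CStarAlgebra A] (C : CommCStarSub A) :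
    (((C.val : Set A) ≠ Set.range (algebraMap ℂ A) ∧
        ∀ D : CommCStarSub A, D < C → (D.val : Set A) = Set.range (algebraMap ℂ A)) ↔
      ∃ e : A, IsSelfAdjoint e ∧ IsIdempotentElem e ∧ e ≠ 0 ∧ e ≠ 1 ∧
        (C.val : Set A) = {x : A | ∃ μ ν : ℂ, x = μ • (1 : A) + ν • e}) ∧
    (((C.val : Set A) ≠ Set.range (algebraMap ℂ A) ∧
        ∀ D : CommCStarSub A, D < C → (D.val : Set A) = Set.range (algebraMap ℂ A)) ↔
      Module.finrank ℂ C.val = 2) := by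
  rw [← CommCStarSub.isAtom_iff]
  have atom_imp_proj (hC : IsAtom C) : ∃ e : A, IsSelfAdjoint e ∧ IsIdempotentElem e ∧
      e ≠ 0 ∧ e ≠ 1 ∧ (C.val : Set A) = {x : A | ∃ μ ν : ℂ, x = μ • (1 : A) + ν • e} := by
    obtain ⟨e, heC, he, he'⟩ := CommCStarSub.exists_isStarProjection_of_isAtom hC
    refine ⟨e, he.isSelfAdjoint, he.isIdempotentElem, fun h => he' (h ▸ zero_mem _),
      fun h => he' (h ▸ one_mem _), ?_⟩
    rw [← CommCStarSub.elemental_eq_of_isAtom hC heC he', he.coe_elemental]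
  have proj_imp_finrank : (∃ e : A, IsSelfAdjoint e ∧ IsIdempotentElem e ∧
      e ≠ 0 ∧ e ≠ 1 ∧ (C.val : Set A) = {x : A | ∃ μ ν : ℂ, x = μ • (1 : A) + ν • e}) →
      finrank ℂ C.val = 2 := by
    rintro ⟨e, -, he, he0, he1, hCe⟩
    exact Subalgebra.finrank_eq_two_of_coe_eq (he.notMem_range_algebraMap he0 he1) hCe
  exact ⟨⟨atom_imp_proj, fun h => CommCStarSub.isAtom_of_finrank_eq_two (proj_imp_finrank h)⟩,
    fun h => proj_imp_finrank (atom_imp_proj h), CommCStarSub.isAtom_of_finrank_eq_two⟩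
end

section
/- Let J : A → B be a unital Jordan *-isomorphism between unital C*-algebras (a linear bijection preserving a ∘ b = (ab + ba)/2, the involution, and the unit). Then the map C ↦ J[C] is an order isomorphism from the poset C(A) of unital commutative C*-subalgebras of A onto C(B). -/
open Complex ComplexStarModule

def IsJordanHom {A B : Type*} [Mul A] [Add A] [Mul B] [Add B] (f : A → B) : Prop :=
  ∀ a b, f (a * b + b * a) = f a * f b + f b * f a

namespace IsJordanHom

section Ring

variable {A B F : Type*} [Ring A] [Ring B] [FunLike F A B] [AddMonoidHomClass F A B] {J : F}

theorem map_mul_self [IsAddTorsionFree B] (hJ : IsJordanHom J) (a : A) :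
    J (a * a) = J a * J a :=
  nsmul_right_injective two_ne_zero <| by simpa only [two_nsmul, map_add] using hJ a a

theorem map_mul_mul_self [IsAddTorsionFree B] (hJ : IsJordanHom J) (a b : A) :
    J (a * b * a) = J a * J b * J a := by
  refine nsmul_right_injective two_ne_zero ?_
  have key : 2 • (a * b * a)
      = a * (a * b + b * a) + (a * b + b * a) * a - (a * a * b + b * (a * a)) := by
    noncomm_ring
  calc 2 • J (a * b * a) = J (2 • (a * b * a)) := (map_nsmul J 2 _).symm
    _ = J a * (J a * J b + J b * J a) + (J a * J b + J b * J a) * J a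
          - (J a * J a * J b + J b * (J a * J a)) := by
      rw [key, map_sub, hJ, hJ, hJ, hJ.map_mul_self]
    _ = 2 • (J a * J b * J a) := by noncomm_ring

theorem map_commutator_mul_self [IsAddTorsionFree B] (hJ : IsJordanHom J) (a b : A) :
    J ((a * b - b * a) * (a * b - b * a))
      = (J a * J b - J b * J a) * (J a * J b - J b * J a) := by
  have key : (a * b - b * a) * (a * b - b * a)
      = (a * b + b * a) * (a * b + b * a) - 2 • (a * (b * b) * a + b * (a * a) * b) := by
    noncomm_ring
  rw [key, map_sub, map_nsmul, map_add, hJ.map_mul_self, hJ, hJ.map_mul_mul_self,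
    hJ.map_mul_mul_self, hJ.map_mul_self, hJ.map_mul_self]
  noncomm_ring

theorem map_mul_of_commute [IsAddTorsionFree B] (hJ : IsJordanHom J) {a b : A}
    (hab : Commute a b) (hJab : Commute (J a) (J b)) : J (a * b) = J a * J b :=
  nsmul_right_injective two_ne_zero <| by
    simpa only [two_nsmul, ← hab.eq, ← hJab.eq, map_add] using hJ a b

theorem symm {R : Type*} [Semiring R] [Module R A] [Module R B] {e : A ≃ₗ[R] B}
    (he : IsJordanHom e) : IsJordanHom e.symm := fun a b =>
  e.injective <| by simp only [he (e.symm a) (e.symm b), e.apply_symm_apply]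

end Ring

theorem commute_of_isSelfAdjoint {A B F : Type*} [Ring A] [NormedRing B] [StarRing B]
    [CStarRing B] [IsAddTorsionFree B] [FunLike F A B] [AddMonoidHomClass F A B] {J : F}
    (hJ : IsJordanHom J) {a b : A} (hab : Commute a b) (ha : IsSelfAdjoint (J a))
    (hb : IsSelfAdjoint (J b)) : Commute (J a) (J b) := by
  set d := J a * J b - J b * J a with hd
  have hd_skew : star d = -d := by
    simp only [hd, star_sub, star_mul, ha.star_eq, hb.star_eq, neg_sub]
  have hd_sq : d * d = 0 := by
    rw [← hJ.map_commutator_mul_self, hab.eq, sub_self, zero_mul, map_zero]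
  have hd_zero : d = 0 :=
    (CStarRing.star_mul_self_eq_zero_iff d).mp (by rw [hd_skew, neg_mul, hd_sq, neg_zero])
  exact sub_eq_zero.mp hd_zero

end IsJordanHom

namespace StarSubalgebra

variable {A : Type*} [Ring A] [StarRing A] [Algebra ℂ A] [StarModule ℂ A]
  (S : StarSubalgebra ℂ A)

theorem realPart_mem {x : A} (hx : x ∈ S) : (ℜ x : A) ∈ S := by
  rw [realPart_apply_coe, ← Complex.coe_smul]
  exact S.smul_mem (add_mem hx (star_mem hx)) _

theorem imaginaryPart_mem {x : A} (hx : x ∈ S) : (ℑ x : A) ∈ S := by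
  rw [imaginaryPart_apply_coe, ← Complex.coe_smul]
  exact S.smul_mem (S.smul_mem (sub_mem hx (star_mem hx)) _) _

end StarSubalgebra

namespace IsJordanHom

section StarSubalgebra

variable {A B F : Type*} [Ring A] [StarRing A] [Algebra ℂ A] [StarModule ℂ A] [CStarAlgebra B]
  [FunLike F A B] [LinearMapClass F ℂ A B] {J : F} {S : StarSubalgebra ℂ A}

theorem commute_map_of_mem (hJ : IsJordanHom J) (hstar : ∀ a, J (star a) = star (J a))
    (hS : ∀ x ∈ S, ∀ y ∈ S, Commute x y) {x y : A} (hx : x ∈ S) (hy : y ∈ S) :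
    Commute (J x) (J y) := by
  have : IsAddTorsionFree B := .of_isTorsionFree ℂ B
  have map_sa : ∀ a, IsSelfAdjoint a → IsSelfAdjoint (J a) := fun a ha => by
    rw [IsSelfAdjoint, ← hstar, ha.star_eq]
  have sa : ∀ a ∈ S, ∀ b ∈ S, IsSelfAdjoint a → IsSelfAdjoint b → Commute (J a) (J b) :=
    fun a ha b hb ha' hb' =>
      hJ.commute_of_isSelfAdjoint (hS a ha b hb) (map_sa a ha') (map_sa b hb')
  rw [← realPart_add_I_smul_imaginaryPart x, ← realPart_add_I_smul_imaginaryPart y,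
    map_add, map_add, map_smul, map_smul]
  have h₁ := sa _ (S.realPart_mem hx) _ (S.realPart_mem hy) (ℜ x).2 (ℜ y).2
  have h₂ := sa _ (S.realPart_mem hx) _ (S.imaginaryPart_mem hy) (ℜ x).2 (ℑ y).2
  have h₃ := sa _ (S.imaginaryPart_mem hx) _ (S.realPart_mem hy) (ℑ x).2 (ℜ y).2
  have h₄ := sa _ (S.imaginaryPart_mem hx) _ (S.imaginaryPart_mem hy) (ℑ x).2 (ℑ y).2
  exact (h₁.add_right (h₂.smul_right I)).add_left
    ((h₃.add_right (h₄.smul_right I)).smul_left I)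

theorem map_mul_of_mem (hJ : IsJordanHom J) (hstar : ∀ a, J (star a) = star (J a))
    (hS : ∀ x ∈ S, ∀ y ∈ S, Commute x y) {x y : A} (hx : x ∈ S) (hy : y ∈ S) :
    J (x * y) = J x * J y :=
  have : IsAddTorsionFree B := .of_isTorsionFree ℂ B
  hJ.map_mul_of_commute (hS x hx y hy) (hJ.commute_map_of_mem hstar hS hx hy)

def restrictStarAlgHom (hJ : IsJordanHom J) (hstar : ∀ a, J (star a) = star (J a))
    (hone : J 1 = 1) (hS : ∀ x ∈ S, ∀ y ∈ S, Commute x y) : S →⋆ₐ[ℂ] B where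
  toFun x := J (x : A)
  map_one' := hone
  map_mul' x y := hJ.map_mul_of_mem hstar hS x.2 y.2
  map_zero' := map_zero J
  map_add' x y := map_add J (x : A) y
  commutes' z := by simp [Algebra.algebraMap_eq_smul_one, hone]
  map_star' x := hstar (x : A)

theorem coe_range_restrictStarAlgHom (hJ : IsJordanHom J)
    (hstar : ∀ a, J (star a) = star (J a)) (hone : J 1 = 1)
    (hS : ∀ x ∈ S, ∀ y ∈ S, Commute x y) :
    ((hJ.restrictStarAlgHom hstar hone hS).range : Set B) = J '' S :=
  (Set.image_eq_range _ _).symm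

end StarSubalgebra

theorem isClosed_image {A B F : Type*} [CStarAlgebra A] [CStarAlgebra B] [FunLike F A B]
    [LinearMapClass F ℂ A B]
    {J : F} {S : StarSubalgebra ℂ A} (hJ : IsJordanHom J) (hstar : ∀ a, J (star a) = star (J a))
    (hone : J 1 = 1) (hinj : Function.Injective J) (hS : ∀ x ∈ S, ∀ y ∈ S, Commute x y)
    (hS_closed : IsClosed (S : Set A)) : IsClosed (J '' S) := by
  -- registers the instance that makes `S` a C⋆-algebra, so that injective ⋆-homs are isometric
  have : IsClosed (S : Set A) := hS_closed
  have hφ := NonUnitalStarAlgHom.isometry (hJ.restrictStarAlgHom hstar hone hS)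
    fun x y h => Subtype.ext (hinj h)
  rw [Set.image_eq_range]
  exact hφ.isClosedEmbedding.isClosed_range

end IsJordanHom

namespace CommCStarSub

theorem commute {A : Type*} [CStarAlgebra A] (C : CommCStarSub A) :
    ∀ x ∈ C.val, ∀ y ∈ C.val, Commute x y :=
  C.2.2

variable {A B F : Type*} [CStarAlgebra A] [CStarAlgebra B] [FunLike F A B]
  [LinearMapClass F ℂ A B] {J : F}

def map (hinj : Function.Injective J) (hJ : IsJordanHom J)
    (hstar : ∀ a, J (star a) = star (J a)) (hone : J 1 = 1) (C : CommCStarSub A) :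
    CommCStarSub B :=
  ⟨(hJ.restrictStarAlgHom hstar hone C.commute).range, by
    rw [hJ.coe_range_restrictStarAlgHom]
    exact hJ.isClosed_image hstar hone hinj C.commute C.2.1, by
    rintro _ ⟨x, rfl⟩ _ ⟨y, rfl⟩
    exact hJ.commute_map_of_mem hstar C.commute x.2 y.2⟩

theorem coe_map (hinj : Function.Injective J) (hJ : IsJordanHom J)
    (hstar : ∀ a, J (star a) = star (J a)) (hone : J 1 = 1) (C : CommCStarSub A) :
    ((map hinj hJ hstar hone C).val : Set B) = J '' C.val :=
  hJ.coe_range_restrictStarAlgHom hstar hone C.commute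

theorem map_le_map_iff (hinj : Function.Injective J) (hJ : IsJordanHom J)
    (hstar : ∀ a, J (star a) = star (J a)) (hone : J 1 = 1) {C D : CommCStarSub A} :
    map hinj hJ hstar hone C ≤ map hinj hJ hstar hone D ↔ C ≤ D := by
  rw [← Subtype.coe_le_coe, ← SetLike.coe_subset_coe, coe_map, coe_map,
    Set.image_subset_image_iff hinj, SetLike.coe_subset_coe, Subtype.coe_le_coe]

end CommCStarSub

/-- Let `J : A → B` be a unital Jordan *-isomorphism between unital
C*-algebras, i.e. a linear bijection preserving the Jordan product
`a ∘ b = (a b + b a)/2`, the involution, and the unit. Then the map `C ↦ J[C]` is an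
order isomorphism from the poset `C(A)` of unital commutative C*-subalgebras of `A` onto
`C(B)`. -/
theorem jordan_star_iso_induces_orderIso
    {A B : Type*} [CStarAlgebra A] [CStarAlgebra B]
    (J : A ≃ₗ[ℂ] B)
    (hstar : ∀ a : A, J (star a) = star (J a))
    (hone : J 1 = 1)
    (hjordan : ∀ a b : A,
      J ((2⁻¹ : ℂ) • (a * b + b * a)) = (2⁻¹ : ℂ) • (J a * J b + J b * J a)) :
    ∃ e : CommCStarSub A ≃o CommCStarSub B,
      ∀ C : CommCStarSub A, ((e C).val : Set B) = J '' (C.val : Set A) := by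
  have hJ : IsJordanHom J := fun a b =>
    smul_right_injective B (inv_ne_zero (two_ne_zero' ℂ))
      (by simpa only [map_smul] using hjordan a b)
  have hstar' : ∀ b, J.symm (star b) = star (J.symm b) := fun b =>
    J.injective (by rw [hstar, J.apply_symm_apply, J.apply_symm_apply])
  have hone' : J.symm 1 = 1 := by rw [← hone, J.symm_apply_apply]
  refine ⟨{ toFun := CommCStarSub.map J.injective hJ hstar hone
            invFun := CommCStarSub.map J.symm.injective hJ.symm hstar' hone'
            left_inv := fun C => Subtype.ext (SetLike.coe_injective ?_)
            right_inv := fun D => Subtype.ext (SetLike.coe_injective ?_)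
            map_rel_iff' := CommCStarSub.map_le_map_iff J.injective hJ hstar hone },
    CommCStarSub.coe_map J.injective hJ hstar hone⟩
  · simp only [CommCStarSub.coe_map, Set.image_image, J.symm_apply_apply, Set.image_id']
  · simp only [CommCStarSub.coe_map, Set.image_image, J.apply_symm_apply, Set.image_id']
end
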